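/- arXiv:2312.03564 — 7 statements merged into one kernel-verified Lean document; each statement's English description precedes it below -/
import Mathlib

section
/- For every positive integer n, the map Ψ sending an n×n magog matrix M to the triangular array whose i-th row lists, in increasing order, the column indices j such that the partial column sum ∑_{i'=1}^{i} M_{i'j} equals 1, is a bijection from the set of n×n magog matrices onto the set of magog triangles of order n. -/
/-- An `n × n` square sign matrix: a `{0, 1, -1}`-matrix whose rows and columns
all sum to 1, whose partial column sums lie in `{0, 1}`, and whose partial row
sums are nonnegative. -/
def IsSquareSign (n : ℕ) (A : Fin n → Fin n → ℤ) : Prop :=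
  (∀ i j, A i j = -1 ∨ A i j = 0 ∨ A i j = 1) ∧
  (∀ j, ∑ i, A i j = 1) ∧
  (∀ i, ∑ j, A i j = 1) ∧
  (∀ i j : Fin n, 0 ≤ ∑ i' ∈ Finset.Iic i, A i' j ∧ ∑ i' ∈ Finset.Iic i, A i' j ≤ 1) ∧
  (∀ i j : Fin n, 0 ≤ ∑ j' ∈ Finset.Iic j, A i j')

/-- An `n × n` magog matrix: a square sign matrix satisfying the
`(i,j)`-special inequalities (stated here with 0-based indices `i, j`,
corresponding to the paper's 1-based `i+1, j+1` with `1 ≤ i, j ≤ n-2`). -/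
def IsMagog (n : ℕ) (A : Fin n → Fin n → ℤ) : Prop :=
  IsSquareSign n A ∧
  ∀ (i j : ℕ) (hi : i + 2 < n) (hj : j + 2 < n),
    0 ≤ (∑ j' ∈ Finset.Iic (⟨j, by omega⟩ : Fin n), A ⟨i + 1, by omega⟩ j')
      + (∑ i' ∈ Finset.Iic (⟨i + 1, by omega⟩ : Fin n), A i' ⟨j + 1, by omega⟩)
      - (∑ i' ∈ Finset.Iic (⟨i, by omega⟩ : Fin n), A i' ⟨j, by omega⟩)

/-- A magog triangle of order `n`, encoded (0-based) as a function `t : ℕ → ℕ → ℕ`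
where `t i k` is the `(k+1)`-st entry of row `i+1` for `k ≤ i < n`, normalized to
be `0` outside the triangular region.  Entries are positive and at most `n`, rows
are strictly increasing, the bottom row is `(1, 2, …, n)`, and each entry plus one
is at least its southeast diagonal neighbor. -/
def IsMagogTriangle (n : ℕ) (t : ℕ → ℕ → ℕ) : Prop :=
  (∀ i k, i < n → k ≤ i → 1 ≤ t i k ∧ t i k ≤ n) ∧
  (∀ i k, i < n → k + 1 ≤ i → t i k < t i (k + 1)) ∧
  (∀ k, k < n → t (n - 1) k = k + 1) ∧
  (∀ i k, i + 1 < n → k ≤ i → t (i + 1) (k + 1) ≤ t i k + 1) ∧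
  (∀ i k, ¬(i < n ∧ k ≤ i) → t i k = 0)

/-- The map `Ψ` sending an `n × n` matrix `M` to the triangular array whose
`(i+1)`-st row lists, in increasing order, the (1-based) column indices `j`
such that the partial column sum `∑_{i'=1}^{i+1} M_{i'j}` equals `1`. -/
def Psi (n : ℕ) (M : Fin n → Fin n → ℤ) : ℕ → ℕ → ℕ := fun i k =>
  if h : i < n then
    ((((Finset.univ.filter
        (fun j : Fin n => (∑ i' ∈ Finset.Iic (⟨i, h⟩ : Fin n), M i' j) = 1))).image
          (fun j : Fin n => (j : ℕ) + 1)).sort (· ≤ ·)).getD k 0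
  else 0


open Finset

variable {α : Type*} [LinearOrder α]

/-- Counting characterization of the k-th smallest element. -/
lemma orderEmbOfFin_le_iff_card (s : Finset α) {m : ℕ} (h : s.card = m) {k : ℕ}
    (hk : k < m) (x : α) :
    s.orderEmbOfFin h ⟨k, hk⟩ ≤ x ↔ k < (s.filter (· ≤ x)).card := by
  set f := s.orderEmbOfFin h with hf
  have hmono : StrictMono f := (s.orderEmbOfFin h).strictMono
  have himg : s.filter (· ≤ x) = (Finset.univ.filter (fun a : Fin m => f a ≤ x)).image f := by
    ext y
    simp only [mem_filter, mem_image, mem_univ, true_and]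
    constructor
    · rintro ⟨hy, hyx⟩
      have : y ∈ Set.range f := by rw [hf, Finset.range_orderEmbOfFin]; exact hy
      obtain ⟨a, rfl⟩ := this
      exact ⟨a, hyx, rfl⟩
    · rintro ⟨a, ha, rfl⟩
      exact ⟨Finset.orderEmbOfFin_mem s h a, ha⟩
  rw [himg, Finset.card_image_of_injective _ hmono.injective]
  constructor
  · intro hle
    have : Finset.Iic (⟨k, hk⟩ : Fin m) ⊆ Finset.univ.filter (fun a : Fin m => f a ≤ x) := by
      intro a ha
      simp only [mem_filter, mem_univ, true_and]
      exact le_trans (hmono.monotone (Finset.mem_Iic.mp ha)) hle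
    have := Finset.card_le_card this
    rw [Fin.card_Iic] at this
    simp only [Fin.val_mk] at this
    omega
  · intro hcard
    by_contra hlt
    push_neg at hlt
    have : Finset.univ.filter (fun a : Fin m => f a ≤ x) ⊆ Finset.Iio (⟨k, hk⟩ : Fin m) := by
      intro a ha
      simp only [mem_filter, mem_univ, true_and] at ha
      rw [Finset.mem_Iio]
      exact hmono.lt_iff_lt.mp (lt_of_le_of_lt ha hlt)
    have := Finset.card_le_card this
    rw [Fin.card_Iio] at this
    simp only [Fin.val_mk] at this
    omega

lemma card_filter_le_orderEmbOfFin (s : Finset α) {m : ℕ} (h : s.card = m) {k : ℕ}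
    (hk : k < m) :
    (s.filter (· ≤ s.orderEmbOfFin h ⟨k, hk⟩)).card = k + 1 := by
  have h1 : k < (s.filter (· ≤ s.orderEmbOfFin h ⟨k, hk⟩)).card :=
    (orderEmbOfFin_le_iff_card s h hk _).mp le_rfl
  rcases Nat.lt_or_ge (k+1) m with hk1 | hk1
  · by_contra hne
    have h2 : k + 1 < (s.filter (· ≤ s.orderEmbOfFin h ⟨k, hk⟩)).card := by omega
    have := (orderEmbOfFin_le_iff_card s h hk1 _).mpr h2
    have hlt : s.orderEmbOfFin h ⟨k, hk⟩ < s.orderEmbOfFin h ⟨k+1, hk1⟩ :=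
      (s.orderEmbOfFin h).strictMono (by simp [Fin.lt_def])
    exact absurd this (not_le.mpr hlt)
  · have hsub := Finset.card_filter_le s (· ≤ s.orderEmbOfFin h ⟨k, hk⟩)
    omega

/-- `k ≤ (k-th element)` in any `Fin`-like count sense: the k-th element of a finset
of `Fin n` has value at least `k`. -/
lemma le_val_orderEmbOfFin {n : ℕ} (s : Finset (Fin n)) {m : ℕ} (h : s.card = m) {k : ℕ}
    (hk : k < m) : k ≤ (s.orderEmbOfFin h ⟨k, hk⟩ : Fin n).val := by
  have h1 := card_filter_le_orderEmbOfFin s h hk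
  have hsub : s.filter (· ≤ s.orderEmbOfFin h ⟨k, hk⟩) ⊆ Finset.Iic (s.orderEmbOfFin h ⟨k, hk⟩) := by
    intro a ha; exact Finset.mem_Iic.mpr (Finset.mem_filter.mp ha).2
  have := Finset.card_le_card hsub
  rw [Fin.card_Iic, h1] at this
  omega

lemma sort_getD_eq_orderEmbOfFin (s : Finset α) {m : ℕ} (h : s.card = m) {k : ℕ}
    (hk : k < m) (d : α) :
    (s.sort (· ≤ ·)).getD k d = s.orderEmbOfFin h ⟨k, hk⟩ := by
  rw [Finset.orderEmbOfFin_apply]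
  exact List.getD_eq_getElem _ d _

lemma sort_getD_of_le (s : Finset α) {k : ℕ} (hk : s.card ≤ k) (d : α) :
    (s.sort (· ≤ ·)).getD k d = d :=
  List.getD_eq_default _ d (by rwa [Finset.length_sort])

/-- `orderEmbOfFin` of a strictly monotone image. -/
lemma orderEmbOfFin_image {β : Type*} [LinearOrder β] (s : Finset α) {m : ℕ} (h : s.card = m)
    (f : α → β) (hf : StrictMono f) (h' : (s.image f).card = m) (k : Fin m) :
    (s.image f).orderEmbOfFin h' k = f (s.orderEmbOfFin h k) := by
  have : (fun a : Fin m => f (s.orderEmbOfFin h a)) = (s.image f).orderEmbOfFin h' := by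
    apply Finset.orderEmbOfFin_unique
    · intro a; exact Finset.mem_image_of_mem f (Finset.orderEmbOfFin_mem s h a)
    · exact hf.comp (s.orderEmbOfFin h).strictMono
  exact (congrFun this k).symm
section MagogAux
open Finset

variable {n : ℕ}

def colSum (M : Fin n → Fin n → ℤ) (i j : Fin n) : ℤ := ∑ i' ∈ Finset.Iic i, M i' j

def rowSet (M : Fin n → Fin n → ℤ) (i : Fin n) : Finset (Fin n) :=
  Finset.univ.filter (fun j => colSum M i j = 1)

lemma Iic_fin_insert {i j : Fin n} (h : (j : ℕ) = (i : ℕ) + 1) :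
    Finset.Iic j = insert j (Finset.Iic i) := by
  ext a
  simp only [Finset.mem_Iic, Finset.mem_insert, Fin.le_def, Fin.ext_iff]
  omega

lemma sum_Iic_succ (f : Fin n → ℤ) {i j : Fin n} (h : (j : ℕ) = (i : ℕ) + 1) :
    ∑ x ∈ Finset.Iic j, f x = f j + ∑ x ∈ Finset.Iic i, f x := by
  rw [Iic_fin_insert h, Finset.sum_insert]
  simp only [Finset.mem_Iic, Fin.le_def]
  omega

lemma sum_Iic_zero (f : Fin n → ℤ) {i : Fin n} (h : (i : ℕ) = 0) :
    ∑ x ∈ Finset.Iic i, f x = f i := by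
  have : Finset.Iic i = {i} := by
    ext a
    simp only [Finset.mem_Iic, Finset.mem_singleton, Fin.le_def, Fin.ext_iff]
    omega
  rw [this, Finset.sum_singleton]

variable {M : Fin n → Fin n → ℤ}

lemma colSum_mem (hsq : IsSquareSign n M) (i j : Fin n) :
    colSum M i j = 0 ∨ colSum M i j = 1 := by
  have h := hsq.2.2.2.1 i j
  unfold colSum
  omega

lemma card_rowSet (hsq : IsSquareSign n M) (i : Fin n) :
    (rowSet M i).card = (i : ℕ) + 1 := by
  have h1 : ((rowSet M i).card : ℤ) = ∑ j, colSum M i j := by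
    rw [rowSet]
    rw [Finset.sum_congr rfl (fun j _ => show colSum M i j = if colSum M i j = 1 then (1:ℤ) else 0 by
      rcases colSum_mem hsq i j with h | h <;> simp [h])]
    simp [Finset.sum_boole]
  have h2 : ∑ j, colSum M i j = (i : ℕ) + 1 := by
    unfold colSum
    rw [Finset.sum_comm]
    rw [Finset.sum_congr rfl (fun i' _ => hsq.2.2.1 i')]
    simp [Fin.card_Iic]
  have := h1.trans h2
  exact_mod_cast this

lemma card_filter_rowSet (hsq : IsSquareSign n M) (i x : Fin n) :
    (((rowSet M i).filter (· ≤ x)).card : ℤ) = ∑ j' ∈ Finset.Iic x, colSum M i j' := by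
  have : (rowSet M i).filter (· ≤ x) = (Finset.Iic x).filter (fun j => colSum M i j = 1) := by
    ext j
    simp only [rowSet, Finset.mem_filter, Finset.mem_univ, true_and, Finset.mem_Iic]
    tauto
  rw [this]
  rw [Finset.sum_congr rfl (fun j _ => show colSum M i j = if colSum M i j = 1 then (1:ℤ) else 0 by
    rcases colSum_mem hsq i j with h | h <;> simp [h])]
  simp [Finset.sum_boole]

lemma val_succ_strictMono : StrictMono (fun j : Fin n => (j : ℕ) + 1) :=
  fun a b hab => by simp only [Fin.lt_def] at hab; exact Nat.succ_lt_succ hab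

lemma card_image_rowSet (hsq : IsSquareSign n M) (i : Fin n) :
    ((rowSet M i).image (fun j : Fin n => (j : ℕ) + 1)).card = (i : ℕ) + 1 := by
  rw [Finset.card_image_of_injective _ val_succ_strictMono.injective, card_rowSet hsq]

lemma Psi_eq_val (hsq : IsSquareSign n M) {i k : ℕ} (h : i < n) (hk : k ≤ i) :
    Psi n M i k =
      ((rowSet M ⟨i, h⟩).orderEmbOfFin (card_rowSet hsq ⟨i, h⟩) ⟨k, by exact Nat.lt_succ_of_le hk⟩ : Fin n).val + 1 := by
  rw [Psi, dif_pos h]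
  have hrw : (Finset.univ.filter
      (fun j : Fin n => (∑ i' ∈ Finset.Iic (⟨i, h⟩ : Fin n), M i' j) = 1)) = rowSet M ⟨i, h⟩ := rfl
  rw [hrw]
  rw [sort_getD_eq_orderEmbOfFin _ (card_image_rowSet hsq ⟨i, h⟩) ((by omega : k < i + 1) :
    k < ((⟨i, h⟩ : Fin n) : ℕ) + 1) 0]
  rw [orderEmbOfFin_image _ (card_rowSet hsq ⟨i, h⟩) _ val_succ_strictMono
    (card_image_rowSet hsq ⟨i, h⟩)]

lemma Psi_eq_zero_of_lt (hsq : IsSquareSign n M) {i k : ℕ} (h : i < n) (hk : i < k) :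
    Psi n M i k = 0 := by
  rw [Psi, dif_pos h]
  have hrw : (Finset.univ.filter
      (fun j : Fin n => (∑ i' ∈ Finset.Iic (⟨i, h⟩ : Fin n), M i' j) = 1)) = rowSet M ⟨i, h⟩ := rfl
  rw [hrw]
  exact sort_getD_of_le _ (by rw [card_image_rowSet hsq]; simp only [Fin.val_mk]; omega) 0

lemma Psi_eq_zero_of_ge {i : ℕ} (h : n ≤ i) (k : ℕ) : Psi n M i k = 0 := by
  rw [Psi, dif_neg (by omega)]

end MagogAux
section Forward
open Finset

variable {n : ℕ} {M : Fin n → Fin n → ℤ}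

lemma sum_colSum_univ (hsq : IsSquareSign n M) (i : Fin n) :
    ∑ j, colSum M i j = (i : ℕ) + 1 := by
  unfold colSum
  rw [Finset.sum_comm]
  rw [Finset.sum_congr rfl (fun i' _ => hsq.2.2.1 i')]
  simp [Fin.card_Iic]

lemma colSum_last (hsq : IsSquareSign n M) {i : Fin n} (h : (i : ℕ) + 1 = n) (j : Fin n) :
    colSum M i j = 1 := by
  have huniv : Finset.Iic i = Finset.univ := by
    ext i'
    simp only [Finset.mem_Iic, Finset.mem_univ, iff_true, Fin.le_def]
    omega
  rw [colSum, huniv]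
  exact hsq.2.1 j

lemma rowSet_last (hsq : IsSquareSign n M) {i : Fin n} (h : (i : ℕ) + 1 = n) :
    rowSet M i = Finset.univ := by
  ext j
  simp [rowSet, colSum_last hsq h]

lemma psi_mapsTo (hM : IsMagog n M) : IsMagogTriangle n (Psi n M) := by
  obtain ⟨hsq, hmg⟩ := hM
  refine ⟨?_, ?_, ?_, ?_, ?_⟩
  · -- bounds
    intro i k hi hk
    rw [Psi_eq_val hsq hi hk]
    refine ⟨by omega, ?_⟩
    have := ((rowSet M ⟨i, hi⟩).orderEmbOfFin (card_rowSet hsq ⟨i, hi⟩)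
      ⟨k, Nat.lt_succ_of_le hk⟩).isLt
    omega
  · -- strictly increasing rows
    intro i k hi hk
    rw [Psi_eq_val hsq hi (by omega), Psi_eq_val hsq hi (by omega)]
    have hlt : (⟨k, by exact (show k < i + 1 by omega)⟩ :
        Fin (((⟨i, hi⟩ : Fin n) : ℕ) + 1)) < ⟨k + 1, by exact (show k + 1 < i + 1 by omega)⟩ := by
      rw [Fin.mk_lt_mk]; omega
    have := ((rowSet M ⟨i, hi⟩).orderEmbOfFin (card_rowSet hsq ⟨i, hi⟩)).strictMono hlt
    rw [Fin.lt_def] at this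
    omega
  · -- bottom row
    intro k hk
    have h1 : n - 1 < n := by omega
    rw [Psi_eq_val hsq h1 (by omega)]
    set a := (rowSet M ⟨n - 1, h1⟩).orderEmbOfFin (card_rowSet hsq ⟨n - 1, h1⟩)
      ⟨k, by exact (show k < n - 1 + 1 by omega)⟩ with ha
    have hcf := card_filter_le_orderEmbOfFin (rowSet M ⟨n - 1, h1⟩) (card_rowSet hsq ⟨n - 1, h1⟩)
      (show k < ((⟨n - 1, h1⟩ : Fin n) : ℕ) + 1 by exact (show k < n - 1 + 1 by omega))
    rw [← ha, rowSet_last hsq (by simp only [Fin.val_mk]; omega)] at hcf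
    have hIic : Finset.univ.filter (· ≤ a) = Finset.Iic a := by
      ext b; simp
    rw [hIic, Fin.card_Iic] at hcf
    omega
  · -- southeast diagonal condition
    intro i k hi hk
    have hi1 : i < n := by omega
    rw [Psi_eq_val hsq hi (by omega), Psi_eq_val hsq hi1 hk]
    set x := (rowSet M ⟨i, hi1⟩).orderEmbOfFin (card_rowSet hsq ⟨i, hi1⟩)
      ⟨k, by exact Nat.lt_succ_of_le hk⟩ with hxdef
    set b := (rowSet M ⟨i + 1, hi⟩).orderEmbOfFin (card_rowSet hsq ⟨i + 1, hi⟩)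
      ⟨k + 1, by exact (show k + 1 < i + 1 + 1 by omega)⟩ with hbdef
    rcases Nat.lt_or_ge ((x : ℕ) + 1) n with hxn | hxn
    swap
    · have := b.isLt; omega
    set y : Fin n := ⟨(x : ℕ) + 1, hxn⟩ with hydef
    suffices hby : b ≤ y by
      rw [Fin.le_def] at hby
      simp only [hydef, Fin.val_mk] at hby
      omega
    rw [hbdef]
    apply (orderEmbOfFin_le_iff_card _ (card_rowSet hsq ⟨i + 1, hi⟩) _ y).mpr
    have hcount := card_filter_rowSet hsq ⟨i + 1, hi⟩ y
    suffices hsum : (k : ℤ) + 2 ≤ ∑ j' ∈ Finset.Iic y, colSum M ⟨i + 1, hi⟩ j' by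
      have hle : ((k : ℤ) + 1) < (((rowSet M ⟨i + 1, hi⟩).filter (· ≤ y)).card : ℤ) := by omega
      exact_mod_cast hle
    -- count of row i up to x equals k + 1
    have hk1 : ∑ j' ∈ Finset.Iic x, colSum M ⟨i, hi1⟩ j' = (k : ℤ) + 1 := by
      have h1 := card_filter_le_orderEmbOfFin (rowSet M ⟨i, hi1⟩) (card_rowSet hsq ⟨i, hi1⟩)
        (show k < ((⟨i, hi1⟩ : Fin n) : ℕ) + 1 by exact Nat.lt_succ_of_le hk)
      have h2 := card_filter_rowSet hsq ⟨i, hi1⟩ x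
      rw [← hxdef] at h1
      rw [h1] at h2
      push_cast at h2
      omega
    have hdec : ∑ j' ∈ Finset.Iic y, colSum M ⟨i + 1, hi⟩ j'
        = colSum M ⟨i + 1, hi⟩ y + ∑ j' ∈ Finset.Iic x, colSum M ⟨i + 1, hi⟩ j' :=
      sum_Iic_succ _ rfl
    have hsplit : ∑ j' ∈ Finset.Iic x, colSum M ⟨i + 1, hi⟩ j'
        = (∑ j' ∈ Finset.Iic x, M ⟨i + 1, hi⟩ j') + ∑ j' ∈ Finset.Iic x, colSum M ⟨i, hi1⟩ j' := by
      rw [← Finset.sum_add_distrib]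
      exact Finset.sum_congr rfl (fun j' _ => sum_Iic_succ (fun i' => M i' j') rfl)
    rcases Nat.lt_or_ge ((x : ℕ) + 2) n with hxn2 | hxn2
    · rcases Nat.lt_or_ge (i + 2) n with hin | hin
      · -- the magog special inequality applies
        have hx1 : colSum M ⟨i, hi1⟩ x = 1 := by
          have hmem := Finset.orderEmbOfFin_mem (rowSet M ⟨i, hi1⟩) (card_rowSet hsq ⟨i, hi1⟩)
            ⟨k, by exact Nat.lt_succ_of_le hk⟩
          rw [← hxdef] at hmem
          exact (Finset.mem_filter.mp hmem).2
        have hmgs : 0 ≤ (∑ j' ∈ Finset.Iic x, M ⟨i + 1, hi⟩ j')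
            + colSum M ⟨i + 1, hi⟩ y - colSum M ⟨i, hi1⟩ x := hmg i (x : ℕ) hin hxn2
        linarith [hdec, hsplit, hk1, hx1, hmgs]
      · -- i + 2 = n : row i+1 is the last row
        have hlast : ∀ j', colSum M ⟨i + 1, hi⟩ j' = 1 :=
          colSum_last hsq (by simp only [Fin.val_mk]; omega)
        have : ∑ j' ∈ Finset.Iic y, colSum M ⟨i + 1, hi⟩ j' = ((y : ℕ) : ℤ) + 1 := by
          rw [Finset.sum_congr rfl (fun j' _ => hlast j')]
          simp [Fin.card_Iic]
        have hkx := le_val_orderEmbOfFin (rowSet M ⟨i, hi1⟩) (card_rowSet hsq ⟨i, hi1⟩)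
          (show k < ((⟨i, hi1⟩ : Fin n) : ℕ) + 1 by exact Nat.lt_succ_of_le hk)
        rw [← hxdef] at hkx
        have hyv : (y : ℕ) = (x : ℕ) + 1 := rfl
        rw [this, hyv]
        push_cast
        omega
    · -- x is the next-to-last column (value n-1): Iic y = univ
      have huniv : Finset.Iic y = Finset.univ := by
        ext j'
        simp only [Finset.mem_Iic, Finset.mem_univ, iff_true, Fin.le_def]
        have := j'.isLt
        have hyv : (y : ℕ) = (x : ℕ) + 1 := rfl
        omega
      rw [huniv, sum_colSum_univ hsq ⟨i + 1, hi⟩]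
      have hiv : ((⟨i + 1, hi⟩ : Fin n) : ℕ) = i + 1 := rfl
      rw [hiv]
      push_cast
      omega
  · -- zero outside the triangle
    intro i k h
    by_cases hi : i < n
    · exact Psi_eq_zero_of_lt hsq hi (by omega)
    · exact Psi_eq_zero_of_ge (by omega) k

end Forward
section Inj
open Finset

variable {n : ℕ} {M M' : Fin n → Fin n → ℤ}

lemma Psi_eq_val' (hsq : IsSquareSign n M) (i : Fin n) (k : Fin ((i : ℕ) + 1)) :
    Psi n M (i : ℕ) (k : ℕ) =
      ((rowSet M i).orderEmbOfFin (card_rowSet hsq i) k : Fin n).val + 1 := by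
  exact Psi_eq_val hsq i.isLt (Nat.lt_succ_iff.mp k.isLt)

lemma rowSet_eq_of_psi_eq (hsq : IsSquareSign n M) (hsq' : IsSquareSign n M')
    (hpsi : Psi n M = Psi n M') (i : Fin n) : rowSet M i = rowSet M' i := by
  have hfun : (((rowSet M i).orderEmbOfFin (card_rowSet hsq i) : Fin _ → Fin n))
      = ((rowSet M' i).orderEmbOfFin (card_rowSet hsq' i) : Fin _ → Fin n) := by
    funext k
    apply Fin.ext
    have h1 := Psi_eq_val' hsq i k
    have h2 := Psi_eq_val' hsq' i k
    rw [hpsi] at h1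
    omega
  have hr1 := Finset.range_orderEmbOfFin (rowSet M i) (card_rowSet hsq i)
  have hr2 := Finset.range_orderEmbOfFin (rowSet M' i) (card_rowSet hsq' i)
  have : ((rowSet M i : Set (Fin n))) = ((rowSet M' i : Set (Fin n))) := by
    rw [← hr1, ← hr2]
    exact congrArg _ hfun
  exact_mod_cast this

lemma colSum_eq_of_psi_eq (hsq : IsSquareSign n M) (hsq' : IsSquareSign n M')
    (hpsi : Psi n M = Psi n M') (i j : Fin n) : colSum M i j = colSum M' i j := by
  have hrs := rowSet_eq_of_psi_eq hsq hsq' hpsi i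
  have hmem : colSum M i j = 1 ↔ colSum M' i j = 1 := by
    constructor
    · intro h
      have : j ∈ rowSet M i := Finset.mem_filter.mpr ⟨Finset.mem_univ j, h⟩
      rw [hrs] at this
      exact (Finset.mem_filter.mp this).2
    · intro h
      have : j ∈ rowSet M' i := Finset.mem_filter.mpr ⟨Finset.mem_univ j, h⟩
      rw [← hrs] at this
      exact (Finset.mem_filter.mp this).2
  rcases colSum_mem hsq i j with h1 | h1 <;> rcases colSum_mem hsq' i j with h2 | h2 <;>
    simp [h1, h2] at hmem ⊢

lemma eq_of_psi_eq (hsq : IsSquareSign n M) (hsq' : IsSquareSign n M')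
    (hpsi : Psi n M = Psi n M') : M = M' := by
  funext i j
  rcases i with ⟨iv, hiv⟩
  cases iv with
  | zero =>
    have a1 : colSum M ⟨0, hiv⟩ j = M ⟨0, hiv⟩ j := sum_Iic_zero _ rfl
    have a2 : colSum M' ⟨0, hiv⟩ j = M' ⟨0, hiv⟩ j := sum_Iic_zero _ rfl
    have := colSum_eq_of_psi_eq hsq hsq' hpsi ⟨0, hiv⟩ j
    omega
  | succ m =>
    have hm : m < n := by omega
    have a1 : colSum M ⟨m + 1, hiv⟩ j = M ⟨m + 1, hiv⟩ j + colSum M ⟨m, hm⟩ j :=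
      sum_Iic_succ (fun i' => M i' j) rfl
    have a2 : colSum M' ⟨m + 1, hiv⟩ j = M' ⟨m + 1, hiv⟩ j + colSum M' ⟨m, hm⟩ j :=
      sum_Iic_succ (fun i' => M' i' j) rfl
    have e1 := colSum_eq_of_psi_eq hsq hsq' hpsi ⟨m + 1, hiv⟩ j
    have e2 := colSum_eq_of_psi_eq hsq hsq' hpsi ⟨m, hm⟩ j
    omega

end Inj
section Surj
open Finset

variable {n : ℕ} {t : ℕ → ℕ → ℕ}

def triSet (t : ℕ → ℕ → ℕ) (i : ℕ) : Finset ℕ := (Finset.range (i + 1)).image (t i)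

def Pt (n : ℕ) (t : ℕ → ℕ → ℕ) (i : ℕ) (j : Fin n) : ℤ :=
  if (j : ℕ) + 1 ∈ triSet t i then 1 else 0

def invM (n : ℕ) (t : ℕ → ℕ → ℕ) : Fin n → Fin n → ℤ :=
  fun i j => Pt n t (i : ℕ) j - if (i : ℕ) = 0 then 0 else Pt n t ((i : ℕ) - 1) j

lemma t_strictMonoOn (hs : ∀ i k, i < n → k + 1 ≤ i → t i k < t i (k + 1))
    {i : ℕ} (hi : i < n) : ∀ {k k' : ℕ}, k < k' → k' ≤ i → t i k < t i k' := by
  intro k k' hkk' hk'i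
  induction k' with
  | zero => omega
  | succ m ih =>
    rcases Nat.lt_or_ge k m with h | h
    · exact lt_trans (ih h (by omega)) (hs i m hi (by omega))
    · have hkm : k = m := by omega
      subst hkm
      exact hs i k hi (by omega)

lemma sum_Pt_Iic (i : ℕ) (x : Fin n) :
    ∑ j' ∈ Finset.Iic x, Pt n t i j' =
      (((Finset.Iic x).filter (fun j : Fin n => (j : ℕ) + 1 ∈ triSet t i)).card : ℤ) := by
  unfold Pt
  simp [Finset.sum_boole]

/-- Counting characterization for the triangle rows. -/
lemma cnt_iff (hb : ∀ i k, i < n → k ≤ i → 1 ≤ t i k ∧ t i k ≤ n)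
    (hs : ∀ i k, i < n → k + 1 ≤ i → t i k < t i (k + 1))
    {i : ℕ} (hi : i < n) (x : Fin n) {m : ℕ} (hm : 1 ≤ m) :
    m ≤ ((Finset.Iic x).filter (fun j : Fin n => (j : ℕ) + 1 ∈ triSet t i)).card ↔
      (m - 1 ≤ i ∧ t i (m - 1) ≤ (x : ℕ) + 1) := by
  constructor
  · intro h
    set K := (Finset.range (i + 1)).filter (fun k => t i k ≤ (x : ℕ) + 1) with hK
    have hsub : (Finset.Iic x).filter (fun j : Fin n => (j : ℕ) + 1 ∈ triSet t i) ⊆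
        K.image (fun k => (⟨min (t i k - 1) (n - 1),
          lt_of_le_of_lt (min_le_right _ _) (by omega)⟩ : Fin n)) := by
      intro j hj
      simp only [Finset.mem_filter, Finset.mem_Iic] at hj
      obtain ⟨hjx, hmem⟩ := hj
      obtain ⟨k, hk, hkj⟩ := Finset.mem_image.mp hmem
      simp only [Finset.mem_range] at hk
      apply Finset.mem_image.mpr
      have hjxv : (j : ℕ) ≤ (x : ℕ) := hjx
      refine ⟨k, ?_, ?_⟩
      · simp only [hK, Finset.mem_filter, Finset.mem_range]
        exact ⟨hk, by omega⟩
      · apply Fin.ext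
        simp only [Fin.val_mk]
        have hjn := j.isLt
        omega
    have hcard := (Finset.card_le_card hsub).trans Finset.card_image_le
    have hdc : ∀ k k' : ℕ, k' ∈ K → k ≤ k' → k ∈ K := by
      intro k k' hk' hkk'
      simp only [hK, Finset.mem_filter, Finset.mem_range] at hk' ⊢
      refine ⟨by omega, ?_⟩
      rcases Nat.eq_or_lt_of_le hkk' with rfl | hlt
      · exact hk'.2
      · exact le_trans (le_of_lt (t_strictMonoOn hs hi hlt (by omega))) hk'.2
    have hmK : m - 1 ∈ K := by
      by_contra hmk
      have hsubK : K ⊆ Finset.range (m - 1) := by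
        intro k hk
        simp only [Finset.mem_range]
        by_contra hge
        push_neg at hge
        exact hmk (hdc (m - 1) k hk hge)
      have := Finset.card_le_card hsubK
      rw [Finset.card_range] at this
      omega
    simp only [hK, Finset.mem_filter, Finset.mem_range] at hmK
    exact ⟨by omega, hmK.2⟩
  · rintro ⟨hmi, hmt⟩
    have hmaps : ∀ k ∈ Finset.range m,
        (⟨min (t i k - 1) (n - 1), lt_of_le_of_lt (min_le_right _ _) (by omega)⟩ : Fin n) ∈
          (Finset.Iic x).filter (fun j : Fin n => (j : ℕ) + 1 ∈ triSet t i) := by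
      intro k hk
      simp only [Finset.mem_range] at hk
      have hki : k ≤ i := by omega
      have hbk := hb i k hi hki
      have hmin : min (t i k - 1) (n - 1) = t i k - 1 := by omega
      have htle : t i k ≤ (x : ℕ) + 1 := by
        rcases Nat.eq_or_lt_of_le (show k ≤ m - 1 by omega) with rfl | hlt
        · exact hmt
        · exact le_trans (le_of_lt (t_strictMonoOn hs hi hlt hmi)) hmt
      simp only [Finset.mem_filter, Finset.mem_Iic]
      constructor
      · show min (t i k - 1) (n - 1) ≤ (x : ℕ)
        omega
      · simp only [Fin.val_mk, hmin]
        rw [Nat.sub_add_cancel hbk.1]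
        exact Finset.mem_image.mpr ⟨k, Finset.mem_range.mpr (by omega), rfl⟩
    have hinj : Set.InjOn (fun k => (⟨min (t i k - 1) (n - 1),
        lt_of_le_of_lt (min_le_right _ _) (by omega)⟩ : Fin n)) (Finset.range m) := by
      intro a ha b hb' hab
      simp only [Finset.coe_range, Set.mem_Iio] at ha hb'
      have hva := hb i a hi (by omega)
      have hvb := hb i b hi (by omega)
      have : min (t i a - 1) (n - 1) = min (t i b - 1) (n - 1) := congrArg Fin.val hab
      by_contra hne
      rcases Nat.lt_or_ge a b with hlt | hge
      · have := t_strictMonoOn hs hi hlt (by omega)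
        omega
      · have hlt : b < a := by omega
        have := t_strictMonoOn hs hi hlt (by omega)
        omega
    have := Finset.card_le_card_of_injOn _ hmaps hinj
    rw [Finset.card_range] at this
    exact this

end Surj
section SurjMain
open Finset

variable {n : ℕ} {t : ℕ → ℕ → ℕ}

set_option maxHeartbeats 1000000 in
lemma psi_surj (hn : 0 < n) (ht : IsMagogTriangle n t) :
    ∃ M : Fin n → Fin n → ℤ, IsMagog n M ∧ Psi n M = t := by
  obtain ⟨hb, hs, hbot, hse, hz⟩ := ht
  set M : Fin n → Fin n → ℤ := invM n t with hMdef
  have hPt01 : ∀ (i : ℕ) (j : Fin n), Pt n t i j = 0 ∨ Pt n t i j = 1 := by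
    intro i j; unfold Pt; split <;> simp
  have hM0 : ∀ (i : Fin n) (j : Fin n),
      M i j = Pt n t (i : ℕ) j - if (i : ℕ) = 0 then 0 else Pt n t ((i : ℕ) - 1) j :=
    fun i j => rfl
  have hcolPt : ∀ (i : ℕ) (hi : i < n) (j : Fin n), colSum M ⟨i, hi⟩ j = Pt n t i j := by
    intro i
    induction i with
    | zero =>
      intro hi j
      have a : colSum M ⟨0, hi⟩ j = M ⟨0, hi⟩ j := sum_Iic_zero _ rfl
      rw [a, hM0]; simp
    | succ m ih =>
      intro hi j
      have hm : m < n := by omega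
      have a : colSum M ⟨m + 1, hi⟩ j = M ⟨m + 1, hi⟩ j + colSum M ⟨m, hm⟩ j :=
        sum_Iic_succ (fun i' => M i' j) rfl
      rw [a, ih hm j, hM0]
      simp
  -- cardinality facts
  have hcardTri : ∀ i : ℕ, i < n → (triSet t i).card = i + 1 := by
    intro i hi
    rw [triSet, Finset.card_image_of_injOn, Finset.card_range]
    intro k hk k' hk' hkk'
    simp only [Finset.coe_range, Set.mem_Iio] at hk hk'
    by_contra hne
    rcases Nat.lt_or_ge k k' with h | h
    · exact absurd hkk' (ne_of_lt (t_strictMonoOn hs hi h (by omega)))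
    · have h' : k' < k := by omega
      exact absurd hkk'.symm (ne_of_lt (t_strictMonoOn hs hi h' (by omega)))
  have hfilterTri : ∀ (i : ℕ), i < n →
      (Finset.univ.filter (fun j : Fin n => (j : ℕ) + 1 ∈ triSet t i)).image
        (fun j : Fin n => (j : ℕ) + 1) = triSet t i := by
    intro i hi
    ext m
    simp only [Finset.mem_image, Finset.mem_filter, Finset.mem_univ, true_and]
    constructor
    · rintro ⟨j, hj, rfl⟩; exact hj
    · intro hm
      obtain ⟨k, hk, hkm⟩ := Finset.mem_image.mp hm
      simp only [Finset.mem_range] at hk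
      have hbk := hb i k hi (by omega)
      refine ⟨⟨m - 1, by omega⟩, ?_, by simp only [Fin.val_mk]; omega⟩
      simp only [Fin.val_mk]
      rw [Nat.sub_add_cancel (by omega)]
      exact hm
  have hcardFilter : ∀ (i : ℕ), i < n →
      (Finset.univ.filter (fun j : Fin n => (j : ℕ) + 1 ∈ triSet t i)).card = i + 1 := by
    intro i hi
    have h1 := hfilterTri i hi
    have h2 : ((Finset.univ.filter (fun j : Fin n => (j : ℕ) + 1 ∈ triSet t i)).image
        (fun j : Fin n => (j : ℕ) + 1)).card =
        (Finset.univ.filter (fun j : Fin n => (j : ℕ) + 1 ∈ triSet t i)).card :=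
      Finset.card_image_of_injective _ (val_succ_strictMono (n := n)).injective
    rw [← h2, h1, hcardTri i hi]
  have hsumPt : ∀ (i : ℕ), i < n → ∑ j, Pt n t i j = (i : ℤ) + 1 := by
    intro i hi
    have h1 : ∑ j, Pt n t i j =
        ((Finset.univ.filter (fun j : Fin n => (j : ℕ) + 1 ∈ triSet t i)).card : ℤ) := by
      unfold Pt; simp [Finset.sum_boole]
    rw [h1, hcardFilter i hi]
    push_cast; ring
  -- counting step lemmas
  have hstep : ∀ (i : ℕ), i + 1 < n → ∀ x : Fin n,
      ((Finset.Iic x).filter (fun j : Fin n => (j : ℕ) + 1 ∈ triSet t i)).card ≤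
      ((Finset.Iic x).filter (fun j : Fin n => (j : ℕ) + 1 ∈ triSet t (i + 1))).card := by
    intro i hi1 x
    have hi : i < n := by omega
    set m := ((Finset.Iic x).filter (fun j : Fin n => (j : ℕ) + 1 ∈ triSet t i)).card with hm
    rcases Nat.eq_zero_or_pos m with h0 | h0
    · omega
    · obtain ⟨hmi, hmt⟩ := (cnt_iff hb hs hi x h0).mp le_rfl
      have ht1 : t (i + 1) (m - 1) ≤ t i (m - 1) := by
        have e1 := hs (i + 1) (m - 1) hi1 (by omega)
        have e2 := hse i (m - 1) hi1 hmi
        rw [Nat.sub_add_cancel h0] at e1 e2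
        omega
      exact (cnt_iff hb hs hi1 x h0).mpr ⟨by omega, by omega⟩
  have hmag2 : ∀ (i : ℕ), i + 1 < n → ∀ (x y : Fin n), (y : ℕ) = (x : ℕ) + 1 →
      (((Finset.Iic x).filter (fun j : Fin n => (j : ℕ) + 1 ∈ triSet t i)).card : ℤ)
        + Pt n t i x ≤
      (((Finset.Iic y).filter (fun j : Fin n => (j : ℕ) + 1 ∈ triSet t (i + 1))).card : ℤ) := by
    intro i hi1 x y hxy
    have hi : i < n := by omega
    set m := ((Finset.Iic x).filter (fun j : Fin n => (j : ℕ) + 1 ∈ triSet t i)).card with hm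
    rcases hPt01 i x with hp | hp
    · rw [hp]
      rcases Nat.eq_zero_or_pos m with h0 | h0
      · simp [h0]
      · obtain ⟨hmi, hmt⟩ := (cnt_iff hb hs hi x h0).mp le_rfl
        have ht1 : t (i + 1) (m - 1) ≤ t i (m - 1) := by
          have e1 := hs (i + 1) (m - 1) hi1 (by omega)
          have e2 := hse i (m - 1) hi1 hmi
          rw [Nat.sub_add_cancel h0] at e1 e2
          omega
        have := (cnt_iff hb hs hi1 y h0).mpr ⟨by omega, by omega⟩
        push_cast
        omega
    · rw [hp]
      -- x.val + 1 ∈ triSet t i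
      have hmem : (x : ℕ) + 1 ∈ triSet t i := by
        by_contra hc
        unfold Pt at hp
        rw [if_neg hc] at hp
        omega
      obtain ⟨k₀, hk₀, hk₀v⟩ := Finset.mem_image.mp hmem
      simp only [Finset.mem_range] at hk₀
      have hk₀i : k₀ ≤ i := by omega
      have hup : m ≤ k₀ + 1 := by
        by_contra hc
        push_neg at hc
        obtain ⟨h1, h2⟩ := (cnt_iff hb hs hi x (by omega)).mp (show k₀ + 2 ≤ m by omega)
        simp only [show k₀ + 2 - 1 = k₀ + 1 from rfl] at h1 h2
        have := hs i k₀ hi (by omega)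
        omega
      have hdn : t (i + 1) (k₀ + 1) ≤ t i k₀ + 1 := hse i k₀ hi1 hk₀i
      have := (cnt_iff hb hs hi1 y (show 1 ≤ k₀ + 2 by omega)).mpr
        ⟨by omega, by simp only [show k₀ + 2 - 1 = k₀ + 1 from rfl]; omega⟩
      push_cast
      omega
  -- square sign
  have hsq : IsSquareSign n M := by
    refine ⟨?_, ?_, ?_, ?_, ?_⟩
    · intro i j
      rw [hM0 i j]
      rcases hPt01 (i : ℕ) j with h1 | h1 <;> rcases hPt01 ((i : ℕ) - 1) j with h2 | h2 <;>
        split_ifs <;> omega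
    · intro j
      have hn' : n - 1 < n := by omega
      have huniv : (Finset.univ : Finset (Fin n)) = Finset.Iic ⟨n - 1, hn'⟩ := by
        ext i'
        simp only [Finset.mem_univ, Finset.mem_Iic, true_iff, Fin.le_def, Fin.val_mk]
        have := i'.isLt
        omega
      rw [huniv]
      have e : ∑ i' ∈ Finset.Iic (⟨n - 1, hn'⟩ : Fin n), M i' j = Pt n t (n - 1) j :=
        hcolPt (n - 1) hn' j
      rw [e]
      unfold Pt
      rw [if_pos]
      exact Finset.mem_image.mpr ⟨(j : ℕ), Finset.mem_range.mpr (by omega), hbot (j : ℕ) j.isLt⟩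
    · intro i
      by_cases h0 : (i : ℕ) = 0
      · have e : ∀ j, M i j = Pt n t (i : ℕ) j := by
          intro j; rw [hM0, if_pos h0]; ring
        rw [Finset.sum_congr rfl (fun j _ => e j), hsumPt (i : ℕ) i.isLt, h0]
        norm_num
      · have e : ∀ j, M i j = Pt n t (i : ℕ) j - Pt n t ((i : ℕ) - 1) j := by
          intro j; rw [hM0, if_neg h0]
        rw [Finset.sum_congr rfl (fun j _ => e j), Finset.sum_sub_distrib,
          hsumPt (i : ℕ) i.isLt, hsumPt ((i : ℕ) - 1) (by omega)]
        have : (((i : ℕ) - 1 : ℕ) : ℤ) = ((i : ℕ) : ℤ) - 1 := by omega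
        rw [this]; ring
    · intro i j
      have e : ∑ i' ∈ Finset.Iic i, M i' j = Pt n t (i : ℕ) j := hcolPt (i : ℕ) i.isLt j
      rw [e]
      rcases hPt01 (i : ℕ) j with h | h <;> omega
    · intro i x
      by_cases h0 : (i : ℕ) = 0
      · have e : ∀ j', M i j' = Pt n t (i : ℕ) j' := by
          intro j'; rw [hM0, if_pos h0]; ring
        rw [Finset.sum_congr rfl (fun j' _ => e j'), sum_Pt_Iic]
        positivity
      · have e : ∀ j', M i j' = Pt n t (i : ℕ) j' - Pt n t ((i : ℕ) - 1) j' := by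
          intro j'; rw [hM0, if_neg h0]
        rw [Finset.sum_congr rfl (fun j' _ => e j'), Finset.sum_sub_distrib,
          sum_Pt_Iic, sum_Pt_Iic]
        have hh := hstep ((i : ℕ) - 1) (by omega) x
        rw [show (i : ℕ) - 1 + 1 = (i : ℕ) by omega] at hh
        push_cast
        omega
  -- magog inequalities
  have hmg : ∀ (i j : ℕ) (hi : i + 2 < n) (hj : j + 2 < n),
      0 ≤ (∑ j' ∈ Finset.Iic (⟨j, by omega⟩ : Fin n), M ⟨i + 1, by omega⟩ j')
        + (∑ i' ∈ Finset.Iic (⟨i + 1, by omega⟩ : Fin n), M i' ⟨j + 1, by omega⟩)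
        - (∑ i' ∈ Finset.Iic (⟨i, by omega⟩ : Fin n), M i' ⟨j, by omega⟩) := by
    intro i j hi hj
    set x : Fin n := ⟨j, by omega⟩ with hx
    set y : Fin n := ⟨j + 1, by omega⟩ with hy
    have e2 : ∑ i' ∈ Finset.Iic (⟨i + 1, by omega⟩ : Fin n), M i' y = Pt n t (i + 1) y :=
      hcolPt (i + 1) (by omega) y
    have e3 : ∑ i' ∈ Finset.Iic (⟨i, by omega⟩ : Fin n), M i' x = Pt n t i x :=
      hcolPt i (by omega) x
    have hM1 : ∀ j' : Fin n, M (⟨i + 1, by omega⟩ : Fin n) j' =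
        Pt n t (i + 1) j' - Pt n t i j' := by
      intro j'
      rw [hM0]
      simp only [Fin.val_mk]
      rw [if_neg (Nat.succ_ne_zero i)]
      norm_num
    have e1 : ∑ j' ∈ Finset.Iic x, M (⟨i + 1, by omega⟩ : Fin n) j'
        = ∑ j' ∈ Finset.Iic x, Pt n t (i + 1) j' - ∑ j' ∈ Finset.Iic x, Pt n t i j' := by
      rw [Finset.sum_congr rfl (fun j' _ => hM1 j'), Finset.sum_sub_distrib]
    have hsy : ∑ j' ∈ Finset.Iic y, Pt n t (i + 1) j'
        = Pt n t (i + 1) y + ∑ j' ∈ Finset.Iic x, Pt n t (i + 1) j' :=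
      sum_Iic_succ _ rfl
    have hkey := hmag2 i (by omega) x y rfl
    have c1 := sum_Pt_Iic (t := t) (n := n) (i + 1) x
    have c2 := sum_Pt_Iic (t := t) (n := n) i x
    have c3 := sum_Pt_Iic (t := t) (n := n) (i + 1) y
    rw [e1, e2, e3]
    omega
  refine ⟨M, ⟨hsq, hmg⟩, ?_⟩
  -- Psi M = t
  funext i k
  by_cases hik : i < n ∧ k ≤ i
  · obtain ⟨hi, hk⟩ := hik
    rw [Psi_eq_val hsq hi hk]
    have hbd : ∀ k' : Fin (i + 1), min (t i (k' : ℕ) - 1) (n - 1) < n :=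
      fun k' => lt_of_le_of_lt (min_le_right _ _) (by omega)
    set g : Fin (i + 1) → Fin n := fun k' => ⟨min (t i (k' : ℕ) - 1) (n - 1), hbd k'⟩ with hg
    have hgmem : ∀ k', g k' ∈ rowSet M ⟨i, hi⟩ := by
      intro k'
      have hbk := hb i (k' : ℕ) hi (Nat.lt_succ_iff.mp k'.isLt)
      apply Finset.mem_filter.mpr
      refine ⟨Finset.mem_univ _, ?_⟩
      have e : colSum M ⟨i, hi⟩ (g k') = Pt n t i (g k') := hcolPt i hi _
      have hmem2 : ((g k' : Fin n) : ℕ) + 1 ∈ triSet t i := by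
        have hv : ((g k' : Fin n) : ℕ) + 1 = t i (k' : ℕ) := by
          simp only [hg, Fin.val_mk]
          omega
        rw [hv]
        exact Finset.mem_image.mpr ⟨(k' : ℕ), Finset.mem_range.mpr k'.isLt, rfl⟩
      rw [e]
      unfold Pt
      rw [if_pos hmem2]
    have hgmono : StrictMono g := by
      intro a b hab
      have hva := hb i (a : ℕ) hi (Nat.lt_succ_iff.mp a.isLt)
      have hvb := hb i (b : ℕ) hi (Nat.lt_succ_iff.mp b.isLt)
      have hlt := t_strictMonoOn hs hi (show (a : ℕ) < (b : ℕ) from hab)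
        (Nat.lt_succ_iff.mp b.isLt)
      simp only [hg, Fin.lt_def, Fin.val_mk]
      omega
    have huniq := Finset.orderEmbOfFin_unique (card_rowSet hsq ⟨i, hi⟩) hgmem hgmono
    have hval : (((rowSet M ⟨i, hi⟩).orderEmbOfFin (card_rowSet hsq ⟨i, hi⟩)
        ⟨k, by exact Nat.lt_succ_of_le hk⟩ : Fin n) : ℕ) = min (t i k - 1) (n - 1) := by
      rw [← huniq]
    have hbk := hb i k hi hk
    omega
  · have hzt := hz i k hik
    rw [hzt]
    by_cases hi : i < n
    · exact Psi_eq_zero_of_lt hsq hi (by omega)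
    · exact Psi_eq_zero_of_ge (by omega) k

end SurjMain

/-- `Ψ` is a bijection from the set of `n × n` magog matrices onto the set of
magog triangles of order `n`. -/
theorem psi_bijOn (n : ℕ) (hn : 0 < n) :
    Set.BijOn (Psi n) {M | IsMagog n M} {t | IsMagogTriangle n t} := by
  refine ⟨fun M hM => psi_mapsTo hM, fun M hM M' hM' h => eq_of_psi_eq hM.1 hM'.1 h, ?_⟩
  intro t ht
  obtain ⟨M, hM, hPsi⟩ := psi_surj hn ht
  exact ⟨M, hM, hPsi⟩
end

section
/- For every positive integer n, the n×n magog matrices with no entry equal to −1 are exactly the permutation matrices of 132-avoiding permutations of {1,…,n}: a permutation matrix is a magog matrix if and only if its permutation avoids the pattern 132. -/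
/-- The permutation matrix of a permutation `π`: `M i j = 1` iff `π i = j`. -/
def permMatrix (n : ℕ) (π : Equiv.Perm (Fin n)) : Fin n → Fin n → ℤ :=
  fun i j => if π i = j then 1 else 0

/-- `π` contains a `132` pattern: there are `i < j < k` with `π i < π k < π j`. -/
def Has132 (n : ℕ) (π : Equiv.Perm (Fin n)) : Prop :=
  ∃ i j k : Fin n, i < j ∧ j < k ∧ π i < π k ∧ π k < π j

/-!
Entries in `{0, 1}` with all line sums 1 force a permutation matrix. For a permutation matrix
every partial line sum is an indicator, so the `(i, j)`-special inequality fails exactly when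
the `1` of column `j` lies above row `i + 1`, the `1` of column `j + 1` lies below it, and the
`1` of row `i + 1` lies right of column `j + 1`: a `132` pattern whose `1` and `2` are
consecutive values. Every `132` pattern can be tightened to one of this kind.
-/

lemma Nat.exists_le_lt_and_not_succ {P : ℕ → Prop} {a b : ℕ} (hab : a ≤ b) (ha : P a)
    (hb : ¬ P b) : ∃ k, a ≤ k ∧ k < b ∧ P k ∧ ¬ P (k + 1) := by
  induction b, hab using Nat.le_induction with
  | base => exact absurd ha hb
  | succ b hab ih =>
    by_cases h : P b
    · exact ⟨b, hab, b.lt_add_one, h, hb⟩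
    · obtain ⟨k, hak, hkb, hk, hk'⟩ := ih h
      exact ⟨k, hak, hkb.trans b.lt_add_one, hk, hk'⟩

lemma existsUnique_eq_one_of_sum_eq_one {ι : Type*} [Fintype ι] {g : ι → ℤ}
    (hg : ∀ x, g x = 0 ∨ g x = 1) (hs : ∑ x, g x = 1) : ∃! x, g x = 1 := by
  classical
  have hcard : ((Finset.univ.filter fun x => g x = 1).card : ℤ) = 1 := by
    rw [Finset.natCast_card_filter]
    exact (Finset.sum_congr rfl fun x _ => by rcases hg x with h | h <;> simp [h]).trans hs
  obtain ⟨x, hx⟩ := Finset.card_eq_one.mp (by exact_mod_cast hcard)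
  exact ⟨x, by simpa [Finset.eq_singleton_iff_unique_mem] using hx⟩

lemma IsSquareSign.exists_eq_permMatrix {n : ℕ} {A : Fin n → Fin n → ℤ} (hA : IsSquareSign n A)
    (hA' : ∀ i j, A i j ≠ -1) : ∃ π : Equiv.Perm (Fin n), A = permMatrix n π := by
  obtain ⟨hent, hcol, hrow, -, -⟩ := hA
  have h01 : ∀ i j, A i j = 0 ∨ A i j = 1 := fun i j => (hent i j).resolve_left (hA' i j)
  choose f hf hf_unique using fun i => existsUnique_eq_one_of_sum_eq_one (h01 i) (hrow i)
  have hinj : f.Injective := fun x y hxy =>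
    (existsUnique_eq_one_of_sum_eq_one (fun i => h01 i (f x)) (hcol (f x))).unique
      (hf x) (hxy ▸ hf y)
  refine ⟨Equiv.ofBijective f hinj.bijective_of_finite, funext₂ fun i j => ?_⟩
  simp only [permMatrix, Equiv.ofBijective_apply]
  split_ifs with hij
  · exact hij ▸ hf i
  · exact (h01 i j).resolve_right fun h1 => hij (hf_unique i j h1).symm

lemma isMagog_iff {n : ℕ} (A : Fin n → Fin n → ℤ) :
    IsMagog n A ↔ IsSquareSign n A ∧ ∀ a b v w : Fin n, (b : ℕ) = a + 1 → (w : ℕ) = v + 1 →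
      (b : ℕ) + 1 < n → (w : ℕ) + 1 < n →
      0 ≤ (∑ j' ∈ Finset.Iic v, A b j') + (∑ i' ∈ Finset.Iic b, A i' w)
        - (∑ i' ∈ Finset.Iic a, A i' v) := by
  refine and_congr_right fun _ => ⟨?_, fun h i j hi hj => h _ _ _ _ rfl rfl hi hj⟩
  rintro h ⟨i, _⟩ ⟨b, _⟩ ⟨j, _⟩ ⟨w, _⟩ hb hw hbn hwn
  simp only at hb hw
  subst hb hw
  exact h i j hbn hwn

section PermMatrix

variable {n : ℕ} (π : Equiv.Perm (Fin n))

lemma permMatrix_ne_neg_one (i j : Fin n) : permMatrix n π i j ≠ -1 := by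
  unfold permMatrix; split <;> norm_num

lemma sum_Iic_permMatrix_row (i j : Fin n) :
    ∑ j' ∈ Finset.Iic j, permMatrix n π i j' = if π i ≤ j then 1 else 0 := by
  simp [permMatrix, Finset.sum_ite_eq]

lemma sum_Iic_permMatrix_col (i j : Fin n) :
    ∑ i' ∈ Finset.Iic i, permMatrix n π i' j = if π.symm j ≤ i then 1 else 0 := by
  simp [permMatrix, ← Equiv.eq_symm_apply, Finset.sum_ite_eq']

lemma isSquareSign_permMatrix : IsSquareSign n (permMatrix n π) := by
  refine ⟨fun i j => ?_, fun j => ?_, fun i => ?_, fun i j => ?_, fun i j => ?_⟩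
  · unfold permMatrix; split <;> simp
  · simp [permMatrix, ← Equiv.eq_symm_apply, Finset.sum_ite_eq']
  · simp [permMatrix, Finset.sum_ite_eq]
  · rw [sum_Iic_permMatrix_col]; split <;> norm_num
  · rw [sum_Iic_permMatrix_row]; split <;> norm_num

def HasConsecutive132 : Prop :=
  ∃ a b c : Fin n, a < b ∧ b < c ∧ (π c : ℕ) = π a + 1 ∧ π c < π b

lemma permMatrix_special_neg_iff {a b v w : Fin n} (hb : (b : ℕ) = a + 1)
    (hw : (w : ℕ) = v + 1) :
    (∑ j' ∈ Finset.Iic v, permMatrix n π b j') + (∑ i' ∈ Finset.Iic b, permMatrix n π i' w)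
        - (∑ i' ∈ Finset.Iic a, permMatrix n π i' v) < 0 ↔
      π.symm v < b ∧ b < π.symm w ∧ w < π b := by
  rw [sum_Iic_permMatrix_row, sum_Iic_permMatrix_col, sum_Iic_permMatrix_col]
  have hπb : π b ≠ w ∨ π.symm w = b := by
    rw [← Equiv.eq_symm_apply]; tauto
  simp only [Fin.le_def, Fin.lt_def, Fin.ext_iff] at hπb ⊢
  split_ifs <;> omega

lemma isMagog_permMatrix_iff_not_hasConsecutive132 :
    IsMagog n (permMatrix n π) ↔ ¬ HasConsecutive132 π := by
  rw [isMagog_iff, and_iff_right (isSquareSign_permMatrix π)]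
  constructor
  · rintro h ⟨a, b, c, hab, hbc, hac, hcb⟩
    have := Fin.lt_def.mp hab; have := Fin.lt_def.mp hbc; have := Fin.lt_def.mp hcb
    obtain ⟨a', hb⟩ : ∃ a' : Fin n, (b : ℕ) = a' + 1 := ⟨⟨b - 1, by omega⟩, by simp; omega⟩
    have hspecial := h a' b (π a) (π c) hb hac (by omega) (by omega)
    rw [← not_lt, permMatrix_special_neg_iff π hb hac] at hspecial
    exact hspecial ⟨by simpa using hab, by simpa using hbc, hcb⟩
  · rintro h a b v w hb hw - -
    rw [← not_lt, permMatrix_special_neg_iff π hb hw]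
    rintro ⟨hvb, hbw, hwb⟩
    exact h ⟨π.symm v, b, π.symm w, hvb, hbw, by simpa using hw, by simpa using hwb⟩

lemma has132_iff_hasConsecutive132 : Has132 n π ↔ HasConsecutive132 π := by
  refine ⟨fun ⟨a, b, c, hab, hbc, hac, hcb⟩ => ?_,
    fun ⟨a, b, c, hab, hbc, hac, hcb⟩ => ⟨a, b, c, hab, hbc, Fin.lt_def.mpr (by omega), hcb⟩⟩
  -- among the values from `π a` up to `π c`, one placed left of `b` is followed by one that is not
  obtain ⟨k, -, hkc, ⟨hkn, hkb⟩, hk'⟩ :=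
    Nat.exists_le_lt_and_not_succ (P := fun k => ∃ hk : k < n, π.symm ⟨k, hk⟩ < b) hac.le
      ⟨(π a).isLt, by simpa using hab⟩ (fun ⟨_, h⟩ => hbc.not_gt (by simpa using h))
  have hk1 : k + 1 < n := by omega
  have hbw : b < π.symm ⟨k + 1, hk1⟩ := by
    refine lt_of_le_of_ne (not_lt.mp fun h => hk' ⟨hk1, h⟩) fun h => ?_
    have := Fin.lt_def.mp hcb
    rw [h, Equiv.apply_symm_apply] at this
    simp only at this
    omega
  exact ⟨π.symm ⟨k, hkn⟩, b, π.symm ⟨k + 1, hk1⟩, hkb, hbw, by simp,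
    Fin.lt_def.mpr (by simp only [Equiv.apply_symm_apply]; omega)⟩

lemma isMagog_permMatrix_iff_not_has132 : IsMagog n (permMatrix n π) ↔ ¬ Has132 n π := by
  rw [has132_iff_hasConsecutive132, isMagog_permMatrix_iff_not_hasConsecutive132]

end PermMatrix

theorem magog_no_neg_one_iff_132_avoiding_general (n : ℕ) :
    (∀ A : Fin n → Fin n → ℤ,
      (IsMagog n A ∧ ∀ i j, A i j ≠ -1) ↔
        ∃ π : Equiv.Perm (Fin n), ¬ Has132 n π ∧ A = permMatrix n π) ∧
    (∀ π : Equiv.Perm (Fin n), IsMagog n (permMatrix n π) ↔ ¬ Has132 n π) := by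
  refine ⟨fun A => ⟨?_, ?_⟩, isMagog_permMatrix_iff_not_has132⟩
  · rintro ⟨hA, hA'⟩
    obtain ⟨π, rfl⟩ := hA.1.exists_eq_permMatrix hA'
    exact ⟨π, (isMagog_permMatrix_iff_not_has132 π).mp hA, rfl⟩
  · rintro ⟨π, h, rfl⟩
    exact ⟨(isMagog_permMatrix_iff_not_has132 π).mpr h, permMatrix_ne_neg_one π⟩

/-- The `n × n` magog matrices with no entry equal to `-1` are exactly the
permutation matrices of `132`-avoiding permutations; moreover a permutation
matrix is a magog matrix if and only if its permutation avoids `132`. -/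
theorem magog_no_neg_one_iff_132_avoiding (n : ℕ) (hn : 0 < n) :
    (∀ A : Fin n → Fin n → ℤ,
      (IsMagog n A ∧ ∀ i j, A i j ≠ -1) ↔
        ∃ π : Equiv.Perm (Fin n), ¬ Has132 n π ∧ A = permMatrix n π) ∧
    (∀ π : Equiv.Perm (Fin n), IsMagog n (permMatrix n π) ↔ ¬ Has132 n π) :=
  magog_no_neg_one_iff_132_avoiding_general n
end

section
/- For every positive integer n, the number of n×n magog matrices with no entry equal to −1 equals the n-th Catalan number (1/(n+1))·C(2n,n). -/
/-!
A magog matrix without `-1` entries has rows and columns that are `0/1` vectors summing to one,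
so it is the permutation matrix of some `σ`. For a permutation matrix all partial sums are
indicators, and the `(i, j)`-special inequality says: if the value `j` occurs in the first `i + 1`
rows, then `σ (i + 1) ≤ j` or the value `j + 1` occurs in the first `i + 2` rows. This is exactly
the condition that `σ` avoids the pattern 132.

A 132-avoiding permutation of `Fin (n + 1)` whose maximum sits at position `k` maps the
positions left of `k` onto the top values `n - k, …, n - 1` and those right of `k` onto
`0, …, n - k - 1`, both parts again avoiding 132. Conversely any two such parts glue together, so
the counts satisfy the Catalan recursion.
-/

open Finset Function Equiv

def Avoids132 {α β : Type*} [LT α] [LT β] (σ : α → β) : Prop :=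
  ¬∃ a b c, a < b ∧ b < c ∧ σ a < σ c ∧ σ c < σ b

section Avoids132

variable {α β γ : Type*}

theorem Avoids132.comp_strictMono [Preorder α] [Preorder β] [LT γ] {σ : β → γ}
    (hσ : Avoids132 σ) {f : α → β} (hf : StrictMono f) : Avoids132 (σ ∘ f) :=
  fun ⟨a, b, c, hab, hbc, h₁, h₂⟩ => hσ ⟨f a, f b, f c, hf hab, hf hbc, h₁, h₂⟩

theorem StrictMono.avoids132_comp_iff [LT α] [LinearOrder β] [Preorder γ] {σ : α → β}
    {g : β → γ} (hg : StrictMono g) : Avoids132 (g ∘ σ) ↔ Avoids132 σ := by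
  simp only [Avoids132, comp_apply, hg.lt_iff_lt]

end Avoids132

abbrev AvoidingPerm (n : ℕ) := {σ : Perm (Fin n) // Avoids132 σ}

namespace Avoids132

variable {n : ℕ} (k : Fin (n + 1))

-- The positions left and right of `k`, and the blocks of values they take in a 132-avoider
-- whose maximum is at `k`.
def leftPos : Fin k → Fin (n + 1) := Fin.castLE k.is_le'

def rightPos (c : Fin (n - k)) : Fin (n + 1) := ⟨k + 1 + c, by omega⟩

def leftVal (a : Fin k) : Fin (n + 1) := ⟨a + (n - k), by omega⟩

def rightVal : Fin (n - k) → Fin (n + 1) := Fin.castLE (by omega)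

theorem strictMono_leftPos : StrictMono (leftPos k) := Fin.strictMono_castLE _

theorem strictMono_rightPos : StrictMono (rightPos k) := fun _ _ h => by
  simp only [rightPos, Fin.lt_def] at h ⊢; omega

theorem strictMono_leftVal : StrictMono (leftVal k) := fun _ _ h => by
  simp only [leftVal, Fin.lt_def] at h ⊢; omega

theorem strictMono_rightVal : StrictMono (rightVal k) := Fin.strictMono_castLE _

variable {k}

theorem leftPos_lt (a : Fin k) : leftPos k a < k := Fin.lt_def.2 a.isLt

theorem lt_rightPos (c : Fin (n - k)) : k < rightPos k c := by
  simp only [rightPos, Fin.lt_def]; omega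

theorem exists_leftPos_eq {x : Fin (n + 1)} (h : x < k) : ∃ a, leftPos k a = x :=
  ⟨⟨x, h⟩, Fin.ext rfl⟩

theorem exists_rightPos_eq {x : Fin (n + 1)} (h : k < x) : ∃ c, rightPos k c = x :=
  ⟨⟨x - k - 1, by omega⟩, Fin.ext <| by simp only [rightPos]; omega⟩

section Decomposition

variable {σ : Fin (n + 1) → Fin (n + 1)}

theorem apply_lt_last (hσ : Injective σ) (hk : σ k = Fin.last n) {x : Fin (n + 1)}
    (hx : x ≠ k) : σ x < Fin.last n :=
  (Fin.le_last _).lt_of_ne (hk ▸ hσ.ne hx)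

theorem iff_of_apply_eq_last (hσ : Injective σ) (hk : σ k = Fin.last n) :
    Avoids132 σ ↔ (∀ a c, σ (rightPos k c) < σ (leftPos k a)) ∧
      Avoids132 (σ ∘ leftPos k) ∧ Avoids132 (σ ∘ rightPos k) := by
  constructor
  · refine fun hav => ⟨fun a c => ?_, hav.comp_strictMono (strictMono_leftPos k),
      hav.comp_strictMono (strictMono_rightPos k)⟩
    have hac : leftPos k a < rightPos k c := (leftPos_lt a).trans (lt_rightPos c)
    have hmax : σ (rightPos k c) < σ k := hk ▸ apply_lt_last hσ hk (lt_rightPos c).ne'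
    exact lt_of_not_ge fun h =>
      hav ⟨_, k, _, leftPos_lt a, lt_rightPos c, h.lt_of_ne (hσ.ne hac.ne), hmax⟩
  · rintro ⟨hcross, hleft, hright⟩ ⟨a, b, c, hab, hbc, h₁, h₂⟩
    rcases lt_trichotomy c k with hc | rfl | hc
    · obtain ⟨a, rfl⟩ := exists_leftPos_eq (hab.trans hbc |>.trans hc)
      obtain ⟨b, rfl⟩ := exists_leftPos_eq (hbc.trans hc)
      obtain ⟨c, rfl⟩ := exists_leftPos_eq hc
      exact hleft ⟨a, b, c, (strictMono_leftPos k).lt_iff_lt.1 hab,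
        (strictMono_leftPos k).lt_iff_lt.1 hbc, h₁, h₂⟩
    · exact (hk ▸ h₂).not_ge (Fin.le_last _)
    · obtain ⟨c, rfl⟩ := exists_rightPos_eq hc
      rcases lt_trichotomy a k with ha | rfl | ha
      · obtain ⟨a, rfl⟩ := exists_leftPos_eq ha
        exact (hcross a c).not_gt h₁
      · exact (hk ▸ h₁).not_ge (Fin.le_last _)
      · obtain ⟨a, rfl⟩ := exists_rightPos_eq ha
        obtain ⟨b, rfl⟩ := exists_rightPos_eq (ha.trans hab)
        exact hright ⟨a, b, c, (strictMono_rightPos k).lt_iff_lt.1 hab,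
          (strictMono_rightPos k).lt_iff_lt.1 hbc, h₁, h₂⟩

theorem sub_le_apply_leftPos (hσ : Injective σ)
    (hcross : ∀ a c, σ (rightPos k c) < σ (leftPos k a)) (a : Fin k) :
    n - k ≤ σ (leftPos k a) := by
  have hsub : univ.image (σ ∘ rightPos k) ⊆ Iio (σ (leftPos k a)) := by
    intro x hx
    obtain ⟨c, -, rfl⟩ := mem_image.1 hx
    exact mem_Iio.2 (hcross a c)
  have := card_le_card hsub
  rwa [card_image_of_injective _ (hσ.comp (strictMono_rightPos k).injective), card_univ,
    Fintype.card_fin, Fin.card_Iio] at this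

theorem apply_rightPos_lt_sub (hσ : Injective σ) (hk : σ k = Fin.last n)
    (hcross : ∀ a c, σ (rightPos k c) < σ (leftPos k a)) (c : Fin (n - k)) :
    (σ (rightPos k c) : ℕ) < n - k := by
  have hsub : (Iic k).image σ ⊆ Ioi (σ (rightPos k c)) := by
    intro x hx
    obtain ⟨y, hy, rfl⟩ := mem_image.1 hx
    rcases (mem_Iic.1 hy).lt_or_eq with hy | rfl
    · obtain ⟨a, rfl⟩ := exists_leftPos_eq hy
      exact mem_Ioi.2 (hcross a c)
    · exact mem_Ioi.2 (hk ▸ apply_lt_last hσ hk (lt_rightPos c).ne')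
  have := card_le_card hsub
  rw [card_image_of_injective _ hσ, Fin.card_Iic, Fin.card_Ioi] at this
  omega

end Decomposition

variable (k) in
def glue (L : Fin k → Fin k) (R : Fin (n - k) → Fin (n - k)) (x : Fin (n + 1)) :
    Fin (n + 1) :=
  if h : (x : ℕ) < k then leftVal k (L ⟨x, h⟩)
  else if h' : (x : ℕ) = k then Fin.last n
  else rightVal k (R ⟨x - k - 1, by omega⟩)

variable {L : Fin k → Fin k} {R : Fin (n - k) → Fin (n - k)}

theorem glue_leftPos (a : Fin k) : glue k L R (leftPos k a) = leftVal k (L a) := by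
  simp [glue, leftPos]

theorem glue_self : glue k L R k = Fin.last n := by
  simp [glue]

theorem glue_rightPos (c : Fin (n - k)) : glue k L R (rightPos k c) = rightVal k (R c) := by
  have h₁ : ¬ (rightPos k c : ℕ) < k := by simp only [rightPos]; omega
  have h₂ : (rightPos k c : ℕ) ≠ k := Fin.val_ne_of_ne (lt_rightPos c).ne'
  simp only [glue, h₁, h₂, dite_false]
  congr
  simp only [rightPos]
  omega

theorem surjective_glue (hL : Surjective L) (hR : Surjective R) : Surjective (glue k L R) := by
  intro y
  by_cases hy : (y : ℕ) < n - k
  · obtain ⟨c, hc⟩ := hR ⟨y, hy⟩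
    exact ⟨rightPos k c, by rw [glue_rightPos, hc]; rfl⟩
  by_cases hlast : y = Fin.last n
  · exact ⟨k, hlast ▸ glue_self⟩
  · obtain ⟨a, ha⟩ := hL ⟨y - (n - k), by have := Fin.val_lt_last hlast; omega⟩
    exact ⟨leftPos k a, by rw [glue_leftPos, ha]; ext; simp [leftVal]; omega⟩

theorem glue_avoids132 (hL : Avoids132 L) (hR : Avoids132 R) (hinj : Injective (glue k L R)) :
    Avoids132 (glue k L R) := by
  refine (iff_of_apply_eq_last hinj glue_self).2 ⟨fun a c => ?_, ?_, ?_⟩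
  · rw [glue_leftPos, glue_rightPos, Fin.lt_def]
    simp only [rightVal, Fin.val_castLE, leftVal]
    omega
  · rwa [show glue k L R ∘ leftPos k = leftVal k ∘ L from funext glue_leftPos,
      (strictMono_leftVal k).avoids132_comp_iff]
  · rwa [show glue k L R ∘ rightPos k = rightVal k ∘ R from funext glue_rightPos,
      (strictMono_rightVal k).avoids132_comp_iff]

theorem exists_glue_eq {σ : Perm (Fin (n + 1))} (hσ : Avoids132 σ) :
    ∃ (k : Fin (n + 1)) (L : Perm (Fin k)) (R : Perm (Fin (n - k))),
      Avoids132 L ∧ Avoids132 R ∧ glue k L R = σ := by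
  set k := σ.symm (Fin.last n)
  have hk : σ k = Fin.last n := σ.apply_symm_apply _
  obtain ⟨hcross, hleft, hright⟩ := (iff_of_apply_eq_last σ.injective hk).1 hσ
  have hlow := sub_le_apply_leftPos σ.injective hcross
  have hL (a : Fin k) : (σ (leftPos k a) : ℕ) - (n - k) < k := by
    have := Fin.val_lt_last (apply_lt_last σ.injective hk (leftPos_lt a).ne).ne
    have := hlow a
    omega
  let L (a : Fin k) : Fin k := ⟨σ (leftPos k a) - (n - k), hL a⟩
  let R (c : Fin (n - k)) : Fin (n - k) :=
    ⟨σ (rightPos k c), apply_rightPos_lt_sub σ.injective hk hcross c⟩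
  have hLσ : leftVal k ∘ L = σ ∘ leftPos k := by
    ext a
    simp only [comp_apply, leftVal, L]
    have := hlow a
    omega
  have hRσ : rightVal k ∘ R = σ ∘ rightPos k := rfl
  have hLinj : Injective L := Injective.of_comp (f := leftVal k) <|
    hLσ ▸ σ.injective.comp (strictMono_leftPos k).injective
  have hRinj : Injective R := Injective.of_comp (f := rightVal k) <|
    hRσ ▸ σ.injective.comp (strictMono_rightPos k).injective
  refine ⟨k, .ofBijective L (Finite.injective_iff_bijective.1 hLinj),
    .ofBijective R (Finite.injective_iff_bijective.1 hRinj),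
    (strictMono_leftVal k).avoids132_comp_iff.1 (hLσ ▸ hleft),
    (strictMono_rightVal k).avoids132_comp_iff.1 (hRσ ▸ hright), funext fun x => ?_⟩
  rcases lt_trichotomy x k with hx | rfl | hx
  · obtain ⟨a, rfl⟩ := exists_leftPos_eq hx
    exact (glue_leftPos a).trans (congrFun hLσ a)
  · exact glue_self.trans hk.symm
  · obtain ⟨c, rfl⟩ := exists_rightPos_eq hx
    exact glue_rightPos c

theorem bijective_glue_of_perm {k : Fin (n + 1)} (L : Perm (Fin k)) (R : Perm (Fin (n - k))) :
    Bijective (glue k L R) :=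
  Finite.surjective_iff_bijective.1 (surjective_glue L.surjective R.surjective)

noncomputable def glueAvoidingPerm
    (x : Σ k : Fin (n + 1), AvoidingPerm k × AvoidingPerm (n - k)) : AvoidingPerm (n + 1) :=
  ⟨.ofBijective _ (bijective_glue_of_perm x.2.1.1 x.2.2.1),
    glue_avoids132 x.2.1.2 x.2.2.2 (bijective_glue_of_perm _ _).injective⟩

theorem bijective_glueAvoidingPerm : Bijective (glueAvoidingPerm (n := n)) := by
  constructor
  · rintro ⟨k, L, R⟩ ⟨k', L', R'⟩ h
    have h : glue k L.1 R.1 = glue k' L'.1 R'.1 :=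
      congrArg (fun τ : AvoidingPerm (n + 1) => ⇑τ.1) h
    obtain rfl : k = k' := (bijective_glue_of_perm L.1 R.1).injective <|
      glue_self.trans ((congrFun h k').trans glue_self).symm
    have hL : L = L' := Subtype.ext <| Equiv.ext fun a => (strictMono_leftVal k).injective <| by
      rw [← glue_leftPos (R := R.1), ← glue_leftPos (R := R'.1), h]
    have hR : R = R' := Subtype.ext <| Equiv.ext fun c => (strictMono_rightVal k).injective <| by
      rw [← glue_rightPos (L := L.1), ← glue_rightPos (L := L'.1), h]
    rw [hL, hR]
  · rintro ⟨σ, hσ⟩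
    obtain ⟨k, L, R, hL, hR, h⟩ := exists_glue_eq hσ
    exact ⟨⟨k, ⟨L, hL⟩, ⟨R, hR⟩⟩, Subtype.ext <| Equiv.ext <| congrFun h⟩

end Avoids132

theorem card_avoidingPerm_succ (n : ℕ) :
    Nat.card (AvoidingPerm (n + 1)) =
      ∑ k : Fin (n + 1), Nat.card (AvoidingPerm k) * Nat.card (AvoidingPerm (n - k)) := by
  simp only [← Nat.card_eq_of_bijective _ Avoids132.bijective_glueAvoidingPerm, Nat.card_sigma,
    Nat.card_prod]

theorem card_avoidingPerm (n : ℕ) : Nat.card (AvoidingPerm n) = catalan n := by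
  induction n using Nat.strong_induction_on with
  | _ n ih =>
    rcases n with _ | n
    · rw [catalan_zero, Nat.card_eq_one_iff_unique]
      exact ⟨inferInstance, ⟨⟨1, fun ⟨a, _⟩ => a.elim0⟩⟩⟩
    · rw [card_avoidingPerm_succ, catalan_succ]
      exact sum_congr rfl fun k _ => by rw [ih k (by omega), ih (n - k) (by omega)]

section GraphMatrix
variable {ι : Type*} [DecidableEq ι]

def graphMatrix (σ : ι → ι) (i j : ι) : ℤ := if σ i = j then 1 else 0

theorem graphMatrix_injective : Injective (graphMatrix (ι := ι)) := fun σ τ h =>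
  funext fun i => by simpa [graphMatrix, eq_comm] using congrFun (congrFun h i) (σ i)

theorem graphMatrix_ne_neg_one (σ : ι → ι) (i j : ι) : graphMatrix σ i j ≠ -1 := by
  unfold graphMatrix
  split_ifs <;> decide

theorem sum_graphMatrix_row (σ : ι → ι) (i : ι) (s : Finset ι) :
    ∑ j ∈ s, graphMatrix σ i j = if σ i ∈ s then 1 else 0 :=
  sum_ite_eq s (σ i) _

theorem sum_graphMatrix_col (σ : Perm ι) (j : ι) (s : Finset ι) :
    ∑ i ∈ s, graphMatrix σ i j = if σ.symm j ∈ s then 1 else 0 := by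
  simp only [graphMatrix, ← σ.eq_symm_apply]
  exact sum_ite_eq' s _ _

theorem exists_eq_ite_of_sum_eq_one [Fintype ι] {v : ι → ℤ} (h01 : ∀ j, v j = 0 ∨ v j = 1)
    (hv : ∑ j, v j = 1) : ∃ x, ∀ j, v j = if x = j then 1 else 0 := by
  have hv' (j : ι) : v j = if v j = 1 then 1 else 0 := by
    rcases h01 j with h | h <;> simp [h]
  rw [sum_congr rfl fun j _ => hv' j, sum_boole, Nat.cast_eq_one] at hv
  obtain ⟨x, hx⟩ := card_eq_one.1 hv
  refine ⟨x, fun j => ?_⟩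
  have hj : v j = 1 ↔ x = j := by simpa [eq_comm] using Finset.ext_iff.1 hx j
  rw [hv' j]
  exact if_congr hj rfl rfl

theorem exists_perm_graphMatrix_eq [Fintype ι] {A : ι → ι → ℤ}
    (h01 : ∀ i j, A i j = 0 ∨ A i j = 1) (hrow : ∀ i, ∑ j, A i j = 1)
    (hcol : ∀ j, ∑ i, A i j = 1) : ∃ σ : Perm ι, graphMatrix σ = A := by
  choose σ hσ using fun i => exists_eq_ite_of_sum_eq_one (h01 i) (hrow i)
  have hA : graphMatrix σ = A := funext fun i => funext fun j => (hσ i j).symm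
  have hinj : Injective σ := by
    intro i₁ i₂ h
    have hfiber := hcol (σ i₁)
    rw [← hA] at hfiber
    simp only [graphMatrix, sum_boole, Nat.cast_eq_one] at hfiber
    exact card_le_one.1 hfiber.le i₁ (by simp) i₂ (by simp [h])
  exact ⟨.ofBijective σ (Finite.injective_iff_bijective.1 hinj), hA⟩

theorem special_inequality_graphMatrix_iff [LinearOrder ι] [LocallyFiniteOrderBot ι]
    (σ : Perm ι) (i i' j j' : ι) :
    0 ≤ ∑ b ∈ Iic j, graphMatrix σ i' b + ∑ a ∈ Iic i', graphMatrix σ a j'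
        - ∑ a ∈ Iic i, graphMatrix σ a j ↔
      (σ.symm j ≤ i → σ i' ≤ j ∨ σ.symm j' ≤ i') := by
  simp only [sum_graphMatrix_row, sum_graphMatrix_col, mem_Iic]
  split_ifs <;> simp_all

end GraphMatrix

section Magog
variable {n : ℕ} {σ : Perm (Fin n)}

theorem isSquareSign_graphMatrix (σ : Perm (Fin n)) : IsSquareSign n (graphMatrix σ) := by
  refine ⟨fun i j => ?_, fun j => ?_, fun i => ?_, fun i j => ?_, fun i j => ?_⟩
  · unfold graphMatrix; split_ifs <;> simp
  · rw [sum_graphMatrix_col, if_pos (mem_univ _)]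
  · rw [sum_graphMatrix_row, if_pos (mem_univ _)]
  · rw [sum_graphMatrix_col]; split_ifs <;> simp
  · rw [sum_graphMatrix_row]; split_ifs <;> simp

theorem avoids132_of_isMagog_graphMatrix (h : IsMagog n (graphMatrix σ)) : Avoids132 σ := by
  simp only [IsMagog, special_inequality_graphMatrix_iff] at h
  rintro ⟨a₀, b₀, c₀, habc₀⟩
  classical
  -- Choose a 132-pattern `(a, b, c)` with `σ a` maximal. The special inequality at row `b - 1`
  -- and column `σ a` puts the value `σ a + 1` before `b`, hence a pattern with larger `σ a`.
  obtain ⟨a, ha, hmax⟩ :=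
    (univ.filter fun a => ∃ b c, a < b ∧ b < c ∧ σ a < σ c ∧ σ c < σ b)
      |>.exists_max_image σ ⟨a₀, mem_filter.2 ⟨mem_univ _, b₀, c₀, habc₀⟩⟩
  obtain ⟨b, c, hab, hbc, h₁, h₂⟩ := (mem_filter.1 ha).2
  simp only [Fin.lt_def] at hab hbc h₁ h₂
  have hb : (⟨b - 1 + 1, by omega⟩ : Fin n) = b := Fin.ext (by simp only; omega)
  have hspecial := h.2 (b - 1) (σ a) (by omega) (by omega)
    (by simp only [Fin.eta, symm_apply_apply, Fin.le_def]; omega)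
  rw [hb] at hspecial
  rcases hspecial with h | h
  · simp only [Fin.le_def] at h
    omega
  set p := σ.symm ⟨σ a + 1, by omega⟩
  have hσp : σ p = ⟨σ a + 1, by omega⟩ := σ.apply_symm_apply _
  have hpb : p < b := by
    refine h.lt_of_ne fun e => ?_
    simp only [e, Fin.ext_iff] at hσp
    omega
  have hpc : σ p < σ c := by
    refine lt_of_le_of_ne ?_ (σ.injective.ne (hpb.trans (Fin.lt_def.2 hbc)).ne)
    simp only [hσp, Fin.le_def]
    omega
  have hle := hmax p <|
    mem_filter.2 ⟨mem_univ _, b, c, hpb, Fin.lt_def.2 hbc, hpc, Fin.lt_def.2 h₂⟩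
  simp only [hσp, Fin.le_def] at hle
  omega

theorem isMagog_graphMatrix_of_avoids132 (h : Avoids132 σ) : IsMagog n (graphMatrix σ) := by
  refine ⟨isSquareSign_graphMatrix σ, fun i j hi hj => ?_⟩
  rw [special_inequality_graphMatrix_iff]
  intro hji
  by_contra! hlt
  have hne : σ ⟨i + 1, by omega⟩ ≠ ⟨j + 1, by omega⟩ := fun e =>
    hlt.2.ne (σ.eq_symm_apply.2 e)
  refine h ⟨_, ⟨i + 1, by omega⟩, _, hji.trans_lt (Fin.lt_def.2 i.lt_succ_self), hlt.2, ?_,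
    ?_⟩
  · simp [Fin.lt_def]
  · simp only [apply_symm_apply, Fin.lt_def, ne_eq, Fin.ext_iff] at hlt hne ⊢
    omega

end Magog

noncomputable def avoidingPermEquivMagog (n : ℕ) :
    AvoidingPerm n ≃ {A : Fin n → Fin n → ℤ // IsMagog n A ∧ ∀ i j, A i j ≠ -1} :=
  .ofBijective (fun σ => ⟨graphMatrix σ.1, isMagog_graphMatrix_of_avoids132 σ.2,
    graphMatrix_ne_neg_one σ.1⟩) <| by
    refine ⟨fun σ τ h => Subtype.ext <| Equiv.coe_fn_injective <|
      graphMatrix_injective (congrArg Subtype.val h), ?_⟩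
    rintro ⟨A, hA, hneg⟩
    obtain ⟨hent, hcol, hrow, -, -⟩ := hA.1
    have h01 (i j : Fin n) : A i j = 0 ∨ A i j = 1 := (hent i j).resolve_left (hneg i j)
    obtain ⟨σ, rfl⟩ := exists_perm_graphMatrix_eq h01 hrow hcol
    exact ⟨⟨σ, avoids132_of_isMagog_graphMatrix hA⟩, rfl⟩

theorem card_magog_no_neg_one_general (n : ℕ) :
    Nat.card {A : Fin n → Fin n → ℤ // IsMagog n A ∧ ∀ i j, A i j ≠ -1} =
      (2 * n).choose n / (n + 1) := by
  rw [← Nat.card_congr (avoidingPermEquivMagog n), card_avoidingPerm,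
    catalan_eq_centralBinom_div, Nat.centralBinom]

/-- The number of `n × n` magog matrices with no entry equal to `-1` is the
`n`-th Catalan number `(1/(n+1)) * C(2n, n)`. -/
theorem card_magog_no_neg_one (n : ℕ) (hn : 0 < n) :
    Nat.card {A : Fin n → Fin n → ℤ // IsMagog n A ∧ ∀ i j, A i j ≠ -1} =
      (2 * n).choose n / (n + 1) :=
  card_magog_no_neg_one_general n
end

section
/- For every n ≥ 1, the maximum, over all n×n square sign matrices A, of the number of entries of A equal to −1 is ⌊(n−1)/2⌋·⌈(n−1)/2⌉. -/
/-- The number of entries of `A` equal to `-1`. -/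
def negCount (n : ℕ) (A : Fin n → Fin n → ℤ) : ℕ :=
  (Finset.univ.filter (fun p : Fin n × Fin n => A p.1 p.2 = -1)).card

/-!
Below a `-1` at position `(i, j)` the partial sum of column `j` over the rows above `i` must be
`1`, and so must the sum of column `j` over the rows below `i`. These partial column sums lie in
`{0, 1}`, and since every row sums to `1` they add up, over all columns, to the number `i` of
rows above, resp. `n - 1 - i` of rows below. Hence row `i` holds at most `min i (n - 1 - i)`
entries `-1`, and these bounds sum to `⌊(n-1)/2⌋ ⌈(n-1)/2⌉`.

They are attained by a symmetric "diamond": with `m = ⌊(n-1)/2⌋`, column `j` is supported on the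
rows `|j - m| ≤ i ≤ min (j + m) (2 (n - 1) - m - j)`, an interval of odd length
`2 min j (n - 1 - j) + 1`, where it reads `1, -1, 1, …, -1, 1`.
-/

open Finset

lemma card_filter_le_sum_of_one_le {ι : Type*} (s : Finset ι) (p : ι → Prop) [DecidablePred p]
    (f : ι → ℤ) (h0 : ∀ i ∈ s, 0 ≤ f i) (h1 : ∀ i ∈ s, p i → 1 ≤ f i) :
    (#(s.filter p) : ℤ) ≤ ∑ i ∈ s, f i := by
  rw [card_filter]
  push_cast
  exact sum_le_sum fun i hi => by split_ifs with h; exacts [h1 i hi h, h0 i hi]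

lemma sum_sum_eq_card_of_sum_eq_one {ι κ : Type*} [Fintype κ] {A : ι → κ → ℤ}
    (hrow : ∀ i, ∑ j, A i j = 1) (s : Finset ι) : ∑ j, ∑ i ∈ s, A i j = #s := by
  rw [sum_comm]
  simp [hrow]

lemma Fin.sum_Iio_mem_of_sum_Iic_mem {n : ℕ} {f : Fin n → ℤ}
    (h : ∀ i, 0 ≤ ∑ i' ∈ Iic i, f i' ∧ ∑ i' ∈ Iic i, f i' ≤ 1) (i : Fin n) :
    0 ≤ ∑ i' ∈ Iio i, f i' ∧ ∑ i' ∈ Iio i, f i' ≤ 1 := by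
  obtain ⟨_ | k, hk⟩ := i
  · rw [Iio_eq_empty.mpr fun x _ => Nat.zero_le x.val, sum_empty]
    exact ⟨le_rfl, zero_le_one⟩
  · have : Iio (⟨k + 1, hk⟩ : Fin n) = Iic ⟨k, by omega⟩ := by
      ext; simp [Fin.lt_def, Fin.le_def]
    simpa [this] using h ⟨k, by omega⟩

lemma Fin.sum_Iic_eq_sum_range {n : ℕ} {M : Type*} [AddCommMonoid M] (f : ℕ → M) (i : Fin n) :
    ∑ k ∈ Iic i, f k = ∑ k ∈ range (i + 1), f k := by
  rw [Nat.range_succ_eq_Iic, ← Fin.map_valEmbedding_Iic, sum_map]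
  rfl

lemma sum_range_min_sub (n : ℕ) : ∑ k ∈ range n, min k (n - 1 - k) = (n - 1) / 2 * (n / 2) := by
  induction n using Nat.twoStepInduction with
  | zero => rfl
  | one => rfl
  | more n ih _ =>
    have shift : ∀ k ∈ range n, min (k + 1) (n + 2 - 1 - (k + 1)) = min k (n - 1 - k) + 1 := by
      intro k hk
      rw [mem_range] at hk
      omega
    have last : min (n + 1) (n + 2 - 1 - (n + 1)) = 0 := by omega
    rw [sum_range_succ, sum_range_succ', sum_congr rfl shift, sum_add_distrib, ih, sum_const,
      card_range, smul_eq_mul, mul_one, Nat.zero_min, last]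
    rcases n with _ | m
    · rfl
    have h1 : (m + 1 + 2 - 1) / 2 = m / 2 + 1 := by omega
    have h2 : (m + 1 + 2) / 2 = (m + 1) / 2 + 1 := by omega
    have h3 : m / 2 + (m + 1) / 2 = m := by omega
    rw [h1, h2, add_tsub_cancel_right]
    nlinarith

lemma Fin.sum_min_sub (n : ℕ) : ∑ i : Fin n, min (i : ℕ) (n - 1 - i) = (n - 1) / 2 * (n / 2) := by
  rw [Fin.sum_univ_eq_sum_range (fun k => min k (n - 1 - k)), sum_range_min_sub]

lemma negCount_eq_sum_card {n : ℕ} (A : Fin n → Fin n → ℤ) :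
    negCount n A = ∑ i, #{j | A i j = -1} := by
  unfold negCount
  rw [card_filter, Fintype.sum_prod_type]
  simp only [card_filter]

lemma card_neg_one_row_le {n : ℕ} {A : Fin n → Fin n → ℤ} (hcol : ∀ j, ∑ i, A i j = 1)
    (hrow : ∀ i, ∑ j, A i j = 1)
    (hpartial : ∀ i j, 0 ≤ ∑ i' ∈ Iic i, A i' j ∧ ∑ i' ∈ Iic i, A i' j ≤ 1) (i : Fin n) :
    #{j | A i j = -1} ≤ min (i : ℕ) (n - 1 - i) := by
  have above_mem j := Fin.sum_Iio_mem_of_sum_Iic_mem (fun i' => hpartial i' j) i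
  have through j : ∑ i' ∈ Iio i, A i' j + A i j = ∑ i' ∈ Iic i, A i' j :=
    sum_Iio_add_eq_sum_Iic (f := fun i' => A i' j) i
  have split j : ∑ i' ∈ Iic i, A i' j + ∑ i' ∈ Ioi i, A i' j = 1 := by
    rw [← hcol j, ← sum_add_sum_compl (Iic i)]
    congr 2
    ext; simp
  have le_above : (#{j | A i j = -1} : ℤ) ≤ ∑ j, ∑ i' ∈ Iio i, A i' j :=
    card_filter_le_sum_of_one_le _ _ _ (fun j _ => (above_mem j).1)
      (fun j _ hj => by linarith [through j, (hpartial i j).1])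
  have le_below : (#{j | A i j = -1} : ℤ) ≤ ∑ j, ∑ i' ∈ Ioi i, A i' j :=
    card_filter_le_sum_of_one_le _ _ _ (fun j _ => by linarith [split j, (hpartial i j).2])
      (fun j _ hj => by linarith [split j, through j, (above_mem j).2])
  rw [sum_sum_eq_card_of_sum_eq_one hrow, Fin.card_Iio] at le_above
  rw [sum_sum_eq_card_of_sum_eq_one hrow, Fin.card_Ioi] at le_below
  omega

def altSign (a b k : ℕ) : ℤ := if a ≤ k ∧ k ≤ b then (-1) ^ (k - a) else 0

lemma altSign_eq_ite (a b k : ℕ) :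
    altSign a b k = if a ≤ k ∧ k ≤ b then (if (k - a) % 2 = 0 then 1 else -1) else 0 := by
  simp only [altSign, neg_one_pow_eq_ite, Nat.even_iff]

lemma altSign_eq_neg_one_iff {a b k : ℕ} :
    altSign a b k = -1 ↔ a ≤ k ∧ k ≤ b ∧ (k - a) % 2 = 1 := by
  grind [altSign_eq_ite]

lemma sum_range_altSign (a b t : ℕ) :
    ∑ k ∈ range t, altSign a b k = ((min t (b + 1) - a) % 2 : ℕ) := by
  induction t with
  | zero => simp
  | succ t ih =>
    rw [sum_range_succ, ih, altSign_eq_ite]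
    split_ifs <;> omega

lemma sum_range_altSign_eq_neg_one (a b t : ℕ) :
    ∑ k ∈ range t, (if altSign a b k = -1 then 1 else 0) = (min t (b + 1) - a) / 2 := by
  induction t with
  | zero => simp
  | succ t ih =>
    rw [sum_range_succ, ih]
    split_ifs with h <;> rw [altSign_eq_neg_one_iff] at h <;> omega

def diamondLo (n j : ℕ) : ℕ := max ((n - 1) / 2 - j) (j - (n - 1) / 2)

def diamondHi (n j : ℕ) : ℕ := min (j + (n - 1) / 2) (2 * (n - 1) - (n - 1) / 2 - j)

def diamond (n i j : ℕ) : ℤ := altSign (diamondLo n j) (diamondHi n j) i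

lemma diamond_comm (n i j : ℕ) : diamond n i j = diamond n j i := by
  simp only [diamond, altSign_eq_ite, diamondLo, diamondHi]
  split_ifs <;> omega

lemma sum_range_diamond_mem (n j t : ℕ) :
    0 ≤ ∑ k ∈ range t, diamond n k j ∧ ∑ k ∈ range t, diamond n k j ≤ 1 := by
  simp only [diamond, sum_range_altSign]
  omega

lemma sum_range_diamond {n j : ℕ} (hj : j < n) : ∑ k ∈ range n, diamond n k j = 1 := by
  simp only [diamond, sum_range_altSign, diamondLo, diamondHi]
  omega

lemma sum_range_diamond_eq_neg_one {n j : ℕ} (hj : j < n) :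
    ∑ k ∈ range n, (if diamond n k j = -1 then 1 else 0) = min j (n - 1 - j) := by
  refine (sum_range_altSign_eq_neg_one (diamondLo n j) (diamondHi n j) n).trans ?_
  simp only [diamondLo, diamondHi]
  omega

lemma isSquareSign_diamond (n : ℕ) : IsSquareSign n (fun i j => diamond n i j) := by
  refine ⟨fun i j => ?_, fun j => ?_, fun i => ?_, fun i j => ?_, fun i j => ?_⟩
  · simp only [diamond, altSign_eq_ite]
    split_ifs <;> simp
  · rw [Fin.sum_univ_eq_sum_range (fun k => diamond n k j)]
    exact sum_range_diamond j.isLt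
  · simp_rw [diamond_comm n i]
    rw [Fin.sum_univ_eq_sum_range (fun k => diamond n k i)]
    exact sum_range_diamond i.isLt
  · rw [Fin.sum_Iic_eq_sum_range (fun k => diamond n k j)]
    exact sum_range_diamond_mem n j _
  · simp_rw [diamond_comm n i]
    rw [Fin.sum_Iic_eq_sum_range (fun k => diamond n k i)]
    exact (sum_range_diamond_mem n i _).1

lemma negCount_diamond (n : ℕ) :
    negCount n (fun i j => diamond n i j) = (n - 1) / 2 * (n / 2) := by
  rw [negCount_eq_sum_card, ← Fin.sum_min_sub]
  refine sum_congr rfl fun i _ => ?_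
  simp_rw [diamond_comm n i, card_filter]
  rw [Fin.sum_univ_eq_sum_range (fun k => if diamond n k i = -1 then 1 else 0)]
  exact sum_range_diamond_eq_neg_one i.isLt

theorem max_negOnes_squareSign_general (n : ℕ) :
    IsGreatest {k : ℕ | ∃ A : Fin n → Fin n → ℤ, IsSquareSign n A ∧ negCount n A = k}
      ((n - 1) / 2 * (n / 2)) := by
  refine ⟨⟨_, isSquareSign_diamond n, negCount_diamond n⟩, ?_⟩
  rintro _ ⟨A, ⟨-, hcol, hrow, hpartial, -⟩, rfl⟩
  rw [negCount_eq_sum_card, ← Fin.sum_min_sub]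
  exact sum_le_sum fun i _ => card_neg_one_row_le hcol hrow hpartial i

/-- The maximum number of entries equal to `-1` over all `n × n` square sign
matrices is `⌊(n-1)/2⌋ * ⌈(n-1)/2⌉`. -/
theorem max_negOnes_squareSign (n : ℕ) (hn : 0 < n) :
    IsGreatest {k : ℕ | ∃ A : Fin n → Fin n → ℤ, IsSquareSign n A ∧ negCount n A = k}
      ((n - 1) / 2 * (n / 2)) :=
  max_negOnes_squareSign_general n
end

section
/- For every n ≥ 1, the only n×n magog matrix whose (1,1) entry equals 1 is the n×n identity matrix; in particular the number of n×n magog matrices with a 1 in row 1, column 1 is exactly 1. -/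
/-- The identity matrix is a magog matrix. -/
lemma id_isMagog (n : ℕ) : IsMagog n (fun i j => if i = j then 1 else 0) := by
  refine ⟨⟨?_, ?_, ?_, ?_, ?_⟩, ?_⟩
  · intro i j
    by_cases h : i = j <;> simp [h]
  · intro j
    rw [Finset.sum_ite_eq' Finset.univ j (fun _ => (1 : ℤ))]
    simp
  · intro i
    rw [Finset.sum_ite_eq Finset.univ i (fun _ => (1 : ℤ))]
    simp
  · intro i j
    rw [Finset.sum_ite_eq' (Finset.Iic i) j (fun _ => (1 : ℤ))]
    split_ifs <;> omega
  · intro i j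
    rw [Finset.sum_ite_eq (Finset.Iic j) i (fun _ => (1 : ℤ))]
    split_ifs <;> omega
  · intro i j hi hj
    rw [Finset.sum_ite_eq (Finset.Iic (⟨j, by omega⟩ : Fin n)) (⟨i + 1, by omega⟩ : Fin n)
        (fun _ => (1 : ℤ)),
      Finset.sum_ite_eq' (Finset.Iic (⟨i + 1, by omega⟩ : Fin n)) (⟨j + 1, by omega⟩ : Fin n)
        (fun _ => (1 : ℤ)),
      Finset.sum_ite_eq' (Finset.Iic (⟨i, by omega⟩ : Fin n)) (⟨j, by omega⟩ : Fin n)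
        (fun _ => (1 : ℤ))]
    simp only [Finset.mem_Iic, Fin.mk_le_mk]
    split_ifs <;> omega

/-- Every row of a magog matrix with a `1` in the corner is the corresponding
identity row. -/
lemma magog_row_eq (n : ℕ) (hn : 0 < n) (A : Fin n → Fin n → ℤ) (hM : IsMagog n A)
    (h00 : A ⟨0, hn⟩ ⟨0, hn⟩ = 1) :
    ∀ (m : ℕ) (hm : m < n) (j : Fin n),
      A ⟨m, hm⟩ j = if (⟨m, hm⟩ : Fin n) = j then 1 else 0 := by
  obtain ⟨⟨hent, hcol, hrow, hpcol, hprow⟩, hspec⟩ := hM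
  intro m
  induction m using Nat.strong_induction_on with
  | _ m IH =>
  intro hm
  match m, hm with
  | 0, hm =>
    -- base case: row 0
    have hIic : Finset.Iic (⟨0, hm⟩ : Fin n) = {⟨0, hm⟩} := by
      ext x
      simp only [Finset.mem_Iic, Finset.mem_singleton, Fin.le_def, Fin.ext_iff]
      omega
    have hnonneg : ∀ j : Fin n, 0 ≤ A ⟨0, hm⟩ j := by
      intro j
      have := (hpcol ⟨0, hm⟩ j).1
      rwa [hIic, Finset.sum_singleton] at this
    have hsum := hrow ⟨0, hm⟩
    have hmem : (⟨0, hm⟩ : Fin n) ∈ Finset.univ := Finset.mem_univ _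
    rw [← Finset.add_sum_erase Finset.univ _ hmem, h00] at hsum
    have herase : ∑ x ∈ Finset.univ.erase (⟨0, hm⟩ : Fin n), A ⟨0, hm⟩ x = 0 := by omega
    have hzero := (Finset.sum_eq_zero_iff_of_nonneg
      (fun i _ => hnonneg i)).mp herase
    intro j
    by_cases hj : (⟨0, hm⟩ : Fin n) = j
    · rw [if_pos hj, ← hj, h00]
    · rw [if_neg hj]
      exact hzero j (Finset.mem_erase.mpr ⟨fun h => hj h.symm, Finset.mem_univ _⟩)
  | (k + 1), hm =>
    set m := k + 1 with hmdef
    -- previous rows are identity rows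
    have hprev : ∀ (i' : Fin n), i'.val < m → ∀ j : Fin n,
        A i' j = if i' = j then 1 else 0 := by
      intro i' hi' j
      have := IH i'.val hi' i'.isLt j
      simpa using this
    -- sum over Iio ⟨m⟩ of entries in column j equals the indicator of j < m
    have hIio : ∀ j : Fin n, ∑ i' ∈ Finset.Iio (⟨m, hm⟩ : Fin n), A i' j
        = if j ∈ Finset.Iio (⟨m, hm⟩ : Fin n) then 1 else 0 := by
      intro j
      rw [Finset.sum_congr rfl (fun i' hi' => hprev i' (by
        simpa [Fin.lt_def] using Finset.mem_Iio.mp hi') j)]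
      exact Finset.sum_ite_eq' _ j (fun _ => (1 : ℤ))
    have hsplit : ∀ j : Fin n, ∑ i' ∈ Finset.Iic (⟨m, hm⟩ : Fin n), A i' j
        = A ⟨m, hm⟩ j + ∑ i' ∈ Finset.Iio (⟨m, hm⟩ : Fin n), A i' j := by
      intro j
      rw [← Finset.Iio_insert, Finset.sum_insert (by simp)]
    -- Step 1: entries left of the diagonal vanish
    have hle : ∀ j : Fin n, j.val < m → A ⟨m, hm⟩ j ≤ 0 := by
      intro j hj
      have h1 := (hpcol ⟨m, hm⟩ j).2
      rw [hsplit j, hIio j, if_pos (Finset.mem_Iio.mpr (by simp [Fin.lt_def, hj]))] at h1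
      omega
    have step1 : ∀ j : Fin n, j.val < m → A ⟨m, hm⟩ j = 0 := by
      intro j hj
      have hnp : ∀ j' ∈ Finset.Iic j, A ⟨m, hm⟩ j' ≤ 0 := by
        intro j' hj'
        have h' := Finset.mem_Iic.mp hj'
        rw [Fin.le_def] at h'
        exact hle j' (by omega)
      have h0 := hprow ⟨m, hm⟩ j
      have hsum0 : ∑ j' ∈ Finset.Iic j, A ⟨m, hm⟩ j' = 0 :=
        le_antisymm (Finset.sum_nonpos hnp) h0
      exact (Finset.sum_eq_zero_iff_of_nonpos hnp).mp hsum0 j (Finset.mem_Iic.mpr le_rfl)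
    -- Step 2: the diagonal entry is 1
    have step2 : A ⟨m, hm⟩ ⟨m, hm⟩ = 1 := by
      by_cases hm2 : m + 1 < n
      · have hs := hspec k k (by omega) (by omega)
        have hT1 : ∑ j' ∈ Finset.Iic (⟨k, by omega⟩ : Fin n), A ⟨k + 1, by omega⟩ j' = 0 :=
          Finset.sum_eq_zero fun j' hj' => by
            have h' := Finset.mem_Iic.mp hj'
            simp only [Fin.le_def, Fin.val_mk] at h'
            exact step1 j' (by omega)
        have hT3 : ∑ i' ∈ Finset.Iic (⟨k, by omega⟩ : Fin n), A i' ⟨k, by omega⟩ = 1 := by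
          rw [Finset.sum_congr rfl (fun i' hi' => hprev i' (by
            have := Finset.mem_Iic.mp hi'; simp only [Fin.le_def, Fin.val_mk] at this; omega)
              ⟨k, by omega⟩)]
          rw [Finset.sum_ite_eq' _ _ (fun _ => (1 : ℤ)),
            if_pos (Finset.mem_Iic.mpr le_rfl)]
        have hT2 : ∑ i' ∈ Finset.Iic (⟨k + 1, by omega⟩ : Fin n), A i' ⟨k + 1, by omega⟩
            = A ⟨m, hm⟩ ⟨m, hm⟩ := by
          have : (⟨k + 1, by omega⟩ : Fin n) = ⟨m, hm⟩ := rfl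
          rw [this, hsplit, hIio, if_neg (by simp [Fin.lt_def])]
          ring
        rw [hT1, hT2, hT3] at hs
        rcases hent ⟨m, hm⟩ ⟨m, hm⟩ with h | h | h <;> omega
      · -- last row: use the row sum
        have hsum := hrow ⟨m, hm⟩
        have : ∀ j ∈ Finset.univ, A ⟨m, hm⟩ j
            = if j = (⟨m, hm⟩ : Fin n) then A ⟨m, hm⟩ ⟨m, hm⟩ else 0 := by
          intro j _
          by_cases hj : j = (⟨m, hm⟩ : Fin n)
          · rw [if_pos hj, hj]
          · rw [if_neg hj]
            exact step1 j (by
              have h1 : j.val < n := j.isLt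
              have h2 : j.val ≠ m := fun h => hj (Fin.ext h)
              omega)
        rw [Finset.sum_congr rfl this,
          Finset.sum_ite_eq' _ _ (fun _ => A ⟨m, hm⟩ ⟨m, hm⟩),
          if_pos (Finset.mem_univ _)] at hsum
        exact hsum
    -- Step 3: entries right of the diagonal vanish
    have hge : ∀ j : Fin n, m < j.val → 0 ≤ A ⟨m, hm⟩ j := by
      intro j hj
      have h1 := (hpcol ⟨m, hm⟩ j).1
      rw [hsplit j, hIio j, if_neg (by
        simp only [Finset.mem_Iio, Fin.lt_def]; omega)] at h1
      omega
    have step3 : ∀ j : Fin n, m < j.val → A ⟨m, hm⟩ j = 0 := by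
      have hsum := hrow ⟨m, hm⟩
      have hmem : (⟨m, hm⟩ : Fin n) ∈ Finset.univ := Finset.mem_univ _
      rw [← Finset.add_sum_erase Finset.univ _ hmem, step2] at hsum
      have herase : ∑ x ∈ Finset.univ.erase (⟨m, hm⟩ : Fin n), A ⟨m, hm⟩ x = 0 := by omega
      have hnn : ∀ x ∈ Finset.univ.erase (⟨m, hm⟩ : Fin n), 0 ≤ A ⟨m, hm⟩ x := by
        intro x hx
        rcases lt_trichotomy x.val m with h | h | h
        · rw [step1 x h]
        · have hxm : x = (⟨m, hm⟩ : Fin n) := Fin.ext h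
          exact absurd hxm (Finset.mem_erase.mp hx).1
        · exact hge x h
      intro j hj
      exact (Finset.sum_eq_zero_iff_of_nonneg hnn).mp herase j
        (Finset.mem_erase.mpr ⟨by simp [Fin.ext_iff]; omega, Finset.mem_univ _⟩)
    intro j
    rcases lt_trichotomy j.val m with h | h | h
    · rw [step1 j h, if_neg (by simp [Fin.ext_iff]; omega)]
    · have : (⟨m, hm⟩ : Fin n) = j := Fin.ext h.symm
      rw [if_pos this, ← this, step2]
    · rw [step3 j h, if_neg (by simp [Fin.ext_iff]; omega)]

/-- The only `n × n` magog matrix with a `1` in the upper-left corner is the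
identity matrix; in particular there is exactly one such magog matrix. -/
theorem magog_corner_one_eq_id (n : ℕ) (hn : 0 < n) :
    (∀ A : Fin n → Fin n → ℤ, IsMagog n A → A ⟨0, hn⟩ ⟨0, hn⟩ = 1 →
      A = fun i j => if i = j then 1 else 0) ∧
    Nat.card {A : Fin n → Fin n → ℤ // IsMagog n A ∧ A ⟨0, hn⟩ ⟨0, hn⟩ = 1} = 1 := by
  have main : ∀ A : Fin n → Fin n → ℤ, IsMagog n A → A ⟨0, hn⟩ ⟨0, hn⟩ = 1 →
      A = fun i j => if i = j then 1 else 0 := by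
    intro A hM h00
    funext i j
    have := magog_row_eq n hn A hM h00 i.val i.isLt j
    simpa using this
  refine ⟨main, ?_⟩
  rw [Nat.card_eq_one_iff_unique]
  constructor
  · constructor
    intro ⟨A, hA, hA0⟩ ⟨B, hB, hB0⟩
    have := (main A hA hA0).trans (main B hB hB0).symm
    exact Subtype.ext this
  · refine ⟨⟨fun i j => if i = j then 1 else 0, id_isMagog n, ?_⟩⟩
    simp
end

section
/- For every n > 1, the number of n×n magog matrices whose (n,1) entry equals 1 (a 1 in the bottom-left corner) equals the total number of (n−1)×(n−1) magog matrices. -/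
/-- ℕ-indexed version of the magog predicate. -/
def NatMagog (n : ℕ) (a : ℕ → ℕ → ℤ) : Prop :=
  (∀ i j, i < n → j < n → a i j = -1 ∨ a i j = 0 ∨ a i j = 1) ∧
  (∀ j, j < n → ∑ i ∈ Finset.range n, a i j = 1) ∧
  (∀ i, i < n → ∑ j ∈ Finset.range n, a i j = 1) ∧
  (∀ i j, i < n → j < n →
    0 ≤ ∑ i' ∈ Finset.range (i + 1), a i' j ∧ ∑ i' ∈ Finset.range (i + 1), a i' j ≤ 1) ∧
  (∀ i j, i < n → j < n → 0 ≤ ∑ j' ∈ Finset.range (j + 1), a i j') ∧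
  (∀ i j, i + 2 < n → j + 2 < n →
    0 ≤ (∑ j' ∈ Finset.range (j + 1), a (i + 1) j')
      + (∑ i' ∈ Finset.range (i + 2), a i' (j + 1))
      - (∑ i' ∈ Finset.range (i + 1), a i' j))

/-- Extension of a `Fin`-matrix to a ℕ-indexed function (zero outside). -/
def extF (n : ℕ) (A : Fin n → Fin n → ℤ) : ℕ → ℕ → ℤ :=
  fun i j => if h : i < n ∧ j < n then A ⟨i, h.1⟩ ⟨j, h.2⟩ else 0

lemma extF_eq {n : ℕ} (A : Fin n → Fin n → ℤ) {i j : ℕ} (hi : i < n) (hj : j < n) :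
    extF n A i j = A ⟨i, hi⟩ ⟨j, hj⟩ := by
  simp [extF, hi, hj]

lemma sum_Iic_ext {n : ℕ} (f : Fin n → ℤ) (g : ℕ → ℤ)
    (hg : ∀ k (hk : k < n), g k = f ⟨k, hk⟩) (i : Fin n) :
    ∑ x ∈ Finset.Iic i, f x = ∑ k ∈ Finset.range (i.1 + 1), g k := by
  have h1 : ∑ x ∈ Finset.Iic i, f x = ∑ x ∈ Finset.Iic i, g x.1 :=
    Finset.sum_congr rfl fun x _ => by rw [hg x.1 x.2]
  have h2 : ∑ k ∈ Finset.Iic (i : ℕ), g k = ∑ x ∈ Finset.Iic i, g x.1 := by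
    rw [← Fin.map_valEmbedding_Iic, Finset.sum_map]
    rfl
  rw [h1, ← h2]
  congr 1
  ext k
  simp [Nat.lt_succ_iff]

lemma sum_univ_ext {n : ℕ} (f : Fin n → ℤ) (g : ℕ → ℤ)
    (hg : ∀ k (hk : k < n), g k = f ⟨k, hk⟩) :
    ∑ x, f x = ∑ k ∈ Finset.range n, g k := by
  rw [← Fin.sum_univ_eq_sum_range]
  exact Finset.sum_congr rfl fun x _ => by rw [hg x.1 x.2, Fin.eta]

lemma isMagog_iff_s7 (n : ℕ) (A : Fin n → Fin n → ℤ) :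
    IsMagog n A ↔ NatMagog n (extF n A) := by
  have key : ∀ (jv : ℕ) (hj : jv < n) (iv : ℕ) (hi : iv < n),
      ∑ i' ∈ Finset.Iic (⟨iv, hi⟩ : Fin n), A i' ⟨jv, hj⟩
        = ∑ k ∈ Finset.range (iv + 1), extF n A k jv := fun jv hj iv hi =>
    sum_Iic_ext _ _ (fun k hk => by rw [extF_eq A hk hj]) ⟨iv, hi⟩
  have keyr : ∀ (iv : ℕ) (hi : iv < n) (jv : ℕ) (hj : jv < n),
      ∑ j' ∈ Finset.Iic (⟨jv, hj⟩ : Fin n), A ⟨iv, hi⟩ j'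
        = ∑ k ∈ Finset.range (jv + 1), extF n A iv k := fun iv hi jv hj =>
    sum_Iic_ext _ _ (fun k hk => by rw [extF_eq A hi hk]) ⟨jv, hj⟩
  have keyu : ∀ (jv : ℕ) (hj : jv < n),
      ∑ i, A i ⟨jv, hj⟩ = ∑ k ∈ Finset.range n, extF n A k jv := fun jv hj =>
    sum_univ_ext _ _ (fun k hk => by rw [extF_eq A hk hj])
  have keyur : ∀ (iv : ℕ) (hi : iv < n),
      ∑ j, A ⟨iv, hi⟩ j = ∑ k ∈ Finset.range n, extF n A iv k := fun iv hi =>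
    sum_univ_ext _ _ (fun k hk => by rw [extF_eq A hi hk])
  constructor
  · rintro ⟨⟨h1, h2, h3, h4, h5⟩, h6⟩
    refine ⟨?_, ?_, ?_, ?_, ?_, ?_⟩
    · intro i j hi hj
      rw [extF_eq A hi hj]; exact h1 _ _
    · intro j hj
      rw [← keyu j hj]; exact h2 _
    · intro i hi
      rw [← keyur i hi]; exact h3 _
    · intro i j hi hj
      rw [← key j hj i hi]; exact h4 _ _
    · intro i j hi hj
      rw [← keyr i hi j hj]; exact h5 _ _
    · intro i j hi hj
      rw [← keyr (i + 1) (by omega) j (by omega), ← key (j + 1) (by omega) (i + 1) (by omega),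
        ← key j (by omega) i (by omega)]
      exact h6 i j hi hj
  · rintro ⟨h1, h2, h3, h4, h5, h6⟩
    refine ⟨⟨?_, ?_, ?_, ?_, ?_⟩, ?_⟩
    · intro i j
      have := h1 i.1 j.1 i.2 j.2
      rwa [extF_eq A i.2 j.2, Fin.eta, Fin.eta] at this
    · intro j
      have := keyu j.1 j.2
      rw [Fin.eta] at this
      rw [this]; exact h2 j.1 j.2
    · intro i
      have := keyur i.1 i.2
      rw [Fin.eta] at this
      rw [this]; exact h3 i.1 i.2
    · intro i j
      have := key j.1 j.2 i.1 i.2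
      rw [Fin.eta, Fin.eta] at this
      rw [this]; exact h4 i.1 j.1 i.2 j.2
    · intro i j
      have := keyr i.1 i.2 j.1 j.2
      rw [Fin.eta, Fin.eta] at this
      rw [this]; exact h5 i.1 j.1 i.2 j.2
    · intro i j hi hj
      rw [keyr (i + 1) (by omega) j (by omega), key (j + 1) (by omega) (i + 1) (by omega),
        key j (by omega) i (by omega)]
      exact h6 i j hi hj

lemma boundary {n : ℕ} (hn : 2 ≤ n) (a : ℕ → ℕ → ℤ) (ha : NatMagog n a)
    (hc : a (n - 1) 0 = 1) :
    (∀ j, j < n → a (n - 1) j = if j = 0 then 1 else 0) ∧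
    (∀ i, i < n - 1 → a i 0 = 0) := by
  obtain ⟨m, rfl⟩ : ∃ m, n = m + 1 := ⟨n - 1, by omega⟩
  have hm : 1 ≤ m := by omega
  simp only [Nat.add_sub_cancel] at hc ⊢
  obtain ⟨h1, h2, h3, h4, h5, h6⟩ := ha
  have hrow_nonneg : ∀ j, j < m + 1 → 0 ≤ a m j := by
    intro j hj
    have hcol := h2 j hj
    have hpart := (h4 (m - 1) j (by omega) hj).2
    have he : m - 1 + 1 = m := by omega
    rw [he] at hpart
    rw [Finset.sum_range_succ] at hcol
    omega
  have hrow0 : ∀ j, j < m + 1 → j ≠ 0 → a m j = 0 := by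
    intro j hj hj0
    have hr := h3 m (by omega)
    rw [Finset.sum_range_succ'] at hr
    have hz : ∑ j' ∈ Finset.range m, a m (j' + 1) = 0 := by omega
    have := (Finset.sum_eq_zero_iff_of_nonneg fun k hk =>
      hrow_nonneg (k + 1) (by have := Finset.mem_range.mp hk; omega)).mp hz
        (j - 1) (Finset.mem_range.mpr (by omega))
    have hjj : j - 1 + 1 = j := by omega
    rwa [hjj] at this
  have hcol_nonneg0 : ∀ i, i < m + 1 → 0 ≤ a i 0 := by
    intro i hi
    have := h5 i 0 hi (by omega)
    simpa using this
  have hcol0 : ∀ i, i < m → a i 0 = 0 := by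
    intro i hi
    have hcol := h2 0 (by omega)
    rw [Finset.sum_range_succ] at hcol
    have hz : ∑ i' ∈ Finset.range m, a i' 0 = 0 := by omega
    exact (Finset.sum_eq_zero_iff_of_nonneg fun k hk =>
      hcol_nonneg0 k (by have := Finset.mem_range.mp hk; omega)).mp hz
        i (Finset.mem_range.mpr hi)
  refine ⟨fun j hj => ?_, hcol0⟩
  by_cases h : j = 0
  · simp [h, hc]
  · simp [h, hrow0 j hj h]

lemma core_fwd {n : ℕ} (hn : 2 ≤ n) (a b : ℕ → ℕ → ℤ) (ha : NatMagog n a)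
    (hc : a (n - 1) 0 = 1) (hb : ∀ i j, i < n - 1 → j < n - 1 → b i j = a i (j + 1)) :
    NatMagog (n - 1) b := by
  obtain ⟨hbd1, hbd2⟩ := boundary hn a ha hc
  obtain ⟨m, rfl⟩ : ∃ m, n = m + 1 := ⟨n - 1, by omega⟩
  have hm : 1 ≤ m := by omega
  simp only [Nat.add_sub_cancel] at hbd1 hbd2 hb ⊢
  obtain ⟨h1, h2, h3, h4, h5, h6⟩ := ha
  refine ⟨?_, ?_, ?_, ?_, ?_, ?_⟩
  · intro i j hi hj
    rw [hb i j hi hj]; exact h1 i (j + 1) (by omega) (by omega)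
  · intro j hj
    have e : ∑ i ∈ Finset.range m, b i j = ∑ i ∈ Finset.range m, a i (j + 1) :=
      Finset.sum_congr rfl fun k hk => hb k j (Finset.mem_range.mp hk) hj
    rw [e]
    have hcol := h2 (j + 1) (by omega)
    rw [Finset.sum_range_succ] at hcol
    have hlast := hbd1 (j + 1) (by omega)
    rw [if_neg (by omega)] at hlast
    omega
  · intro i hi
    have e : ∑ j ∈ Finset.range m, b i j = ∑ j ∈ Finset.range m, a i (j + 1) :=
      Finset.sum_congr rfl fun k hk => hb i k hi (Finset.mem_range.mp hk)
    rw [e]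
    have hrow := h3 i (by omega)
    rw [Finset.sum_range_succ'] at hrow
    have := hbd2 i hi
    omega
  · intro i j hi hj
    have e : ∑ i' ∈ Finset.range (i + 1), b i' j = ∑ i' ∈ Finset.range (i + 1), a i' (j + 1) :=
      Finset.sum_congr rfl fun k hk => hb k j (by have := Finset.mem_range.mp hk; omega) hj
    rw [e]
    exact h4 i (j + 1) (by omega) (by omega)
  · intro i j hi hj
    have e : ∑ j' ∈ Finset.range (j + 1), b i j' = ∑ j' ∈ Finset.range (j + 1), a i (j' + 1) :=
      Finset.sum_congr rfl fun k hk => hb i k hi (by have := Finset.mem_range.mp hk; omega)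
    rw [e]
    have hp := h5 i (j + 1) (by omega) (by omega)
    rw [Finset.sum_range_succ'] at hp
    have := hbd2 i hi
    omega
  · intro i j hi hj
    have e1 : ∑ j' ∈ Finset.range (j + 1), b (i + 1) j'
        = ∑ j' ∈ Finset.range (j + 1), a (i + 1) (j' + 1) :=
      Finset.sum_congr rfl fun k hk => hb (i + 1) k (by omega)
        (by have := Finset.mem_range.mp hk; omega)
    have e2 : ∑ i' ∈ Finset.range (i + 2), b i' (j + 1)
        = ∑ i' ∈ Finset.range (i + 2), a i' (j + 1 + 1) :=
      Finset.sum_congr rfl fun k hk => hb k (j + 1)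
        (by have := Finset.mem_range.mp hk; omega) (by omega)
    have e3 : ∑ i' ∈ Finset.range (i + 1), b i' j
        = ∑ i' ∈ Finset.range (i + 1), a i' (j + 1) :=
      Finset.sum_congr rfl fun k hk => hb k j
        (by have := Finset.mem_range.mp hk; omega) (by omega)
    rw [e1, e2, e3]
    have hs := h6 i (j + 1) (by omega) (by omega)
    rw [Finset.sum_range_succ'] at hs
    have := hbd2 (i + 1) (by omega)
    omega

lemma core_bwd {n : ℕ} (hn : 2 ≤ n) (a b : ℕ → ℕ → ℤ) (hbm : NatMagog (n - 1) b)
    (h1 : ∀ j, j < n → a (n - 1) j = if j = 0 then 1 else 0)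
    (h2 : ∀ i, i < n - 1 → a i 0 = 0)
    (h3 : ∀ i j, i < n - 1 → j < n - 1 → a i (j + 1) = b i j) :
    NatMagog n a := by
  obtain ⟨m, rfl⟩ : ∃ m, n = m + 1 := ⟨n - 1, by omega⟩
  have hm : 1 ≤ m := by omega
  simp only [Nat.add_sub_cancel] at hbm h1 h2 h3
  obtain ⟨g1, g2, g3, g4, g5, g6⟩ := hbm
  refine ⟨?_, ?_, ?_, ?_, ?_, ?_⟩
  · intro i j hi hj
    rcases Nat.lt_or_ge i m with hi' | hi'
    · rcases Nat.eq_zero_or_pos j with rfl | hj0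
      · rw [h2 i hi']; tauto
      · obtain ⟨j', rfl⟩ : ∃ j', j = j' + 1 := ⟨j - 1, by omega⟩
        rw [h3 i j' hi' (by omega)]; exact g1 i j' hi' (by omega)
    · have hieq : m = i := by omega
      subst hieq
      rw [h1 j hj]
      split <;> tauto
  · intro j hj
    rcases Nat.eq_zero_or_pos j with rfl | hj0
    · have hz : ∑ i ∈ Finset.range m, a i 0 = 0 :=
        Finset.sum_eq_zero fun k hk => h2 k (Finset.mem_range.mp hk)
      rw [Finset.sum_range_succ, hz, h1 0 hj, if_pos rfl]
      norm_num
    · obtain ⟨j', rfl⟩ : ∃ j', j = j' + 1 := ⟨j - 1, by omega⟩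
      have hz : ∑ i ∈ Finset.range m, a i (j' + 1)
          = ∑ i ∈ Finset.range m, b i j' :=
        Finset.sum_congr rfl fun k hk => h3 k j' (Finset.mem_range.mp hk) (by omega)
      rw [Finset.sum_range_succ, hz, h1 (j' + 1) hj, if_neg (by omega),
        g2 j' (by omega)]
      norm_num
  · intro i hi
    rcases Nat.lt_or_ge i m with hi' | hi'
    · rw [Finset.sum_range_succ', h2 i hi']
      have hz : ∑ j ∈ Finset.range m, a i (j + 1)
          = ∑ j ∈ Finset.range m, b i j :=
        Finset.sum_congr rfl fun k hk => h3 i k hi' (Finset.mem_range.mp hk)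
      rw [hz, g3 i hi']
      norm_num
    · have hieq : m = i := by omega
      subst hieq
      rw [Finset.sum_range_succ', h1 0 (by omega), if_pos rfl]
      have hz : ∑ j ∈ Finset.range m, a m (j + 1) = 0 :=
        Finset.sum_eq_zero fun k hk => by
          rw [h1 (k + 1) (by have := Finset.mem_range.mp hk; omega), if_neg (by omega)]
      rw [hz]
      norm_num
  · intro i j hi hj
    rcases Nat.eq_zero_or_pos j with rfl | hj0
    · rcases Nat.lt_or_ge i m with hi' | hi'
      · have hz : ∑ i' ∈ Finset.range (i + 1), a i' 0 = 0 :=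
          Finset.sum_eq_zero fun k hk => h2 k (by have := Finset.mem_range.mp hk; omega)
        rw [hz]
        exact ⟨le_refl 0, by norm_num⟩
      · have hieq : m = i := by omega
        subst hieq
        rw [Finset.sum_range_succ, h1 0 (by omega), if_pos rfl]
        have hz : ∑ i' ∈ Finset.range m, a i' 0 = 0 :=
          Finset.sum_eq_zero fun k hk => h2 k (Finset.mem_range.mp hk)
        rw [hz]
        norm_num
    · obtain ⟨j', rfl⟩ : ∃ j', j = j' + 1 := ⟨j - 1, by omega⟩
      rcases Nat.lt_or_ge i m with hi' | hi'
      · have hz : ∑ i' ∈ Finset.range (i + 1), a i' (j' + 1)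
            = ∑ i' ∈ Finset.range (i + 1), b i' j' :=
          Finset.sum_congr rfl fun k hk => h3 k j'
            (by have := Finset.mem_range.mp hk; omega) (by omega)
        rw [hz]
        exact g4 i j' hi' (by omega)
      · have hieq : m = i := by omega
        subst hieq
        rw [Finset.sum_range_succ, h1 (j' + 1) (by omega), if_neg (by omega)]
        have hz : ∑ i' ∈ Finset.range m, a i' (j' + 1)
            = ∑ i' ∈ Finset.range m, b i' j' :=
          Finset.sum_congr rfl fun k hk => h3 k j' (Finset.mem_range.mp hk) (by omega)
        rw [hz, add_zero, g2 j' (by omega)]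
        norm_num
  · intro i j hi hj
    rcases Nat.lt_or_ge i m with hi' | hi'
    · rw [Finset.sum_range_succ', h2 i hi', add_zero]
      rcases Nat.eq_zero_or_pos j with rfl | hj0
      · simp
      · have hz : ∑ j' ∈ Finset.range j, a i (j' + 1) = ∑ j' ∈ Finset.range j, b i j' :=
          Finset.sum_congr rfl fun k hk => h3 i k hi'
            (by have := Finset.mem_range.mp hk; omega)
        rw [hz]
        have hg := g5 i (j - 1) hi' (by omega)
        have hj1 : j - 1 + 1 = j := by omega
        rwa [hj1] at hg
    · have hieq : m = i := by omega
      subst hieq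
      apply Finset.sum_nonneg
      intro k hk
      rw [h1 k (by have := Finset.mem_range.mp hk; omega)]
      split <;> norm_num
  · intro i j hi hj
    have hi1 : i + 1 < m := by omega
    rcases Nat.eq_zero_or_pos j with rfl | hj0
    · rw [Finset.sum_range_one, h2 (i + 1) hi1]
      have hz3 : ∑ i' ∈ Finset.range (i + 1), a i' 0 = 0 :=
        Finset.sum_eq_zero fun k hk => h2 k (by have := Finset.mem_range.mp hk; omega)
      have hz2 : ∑ i' ∈ Finset.range (i + 2), a i' (0 + 1)
          = ∑ i' ∈ Finset.range (i + 2), b i' 0 :=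
        Finset.sum_congr rfl fun k hk => h3 k 0
          (by have := Finset.mem_range.mp hk; omega) (by omega)
      rw [hz3, hz2]
      have hg : 0 ≤ ∑ i' ∈ Finset.range (i + 2), b i' 0 := (g4 (i + 1) 0 hi1 (by omega)).1
      omega
    · obtain ⟨j', rfl⟩ : ∃ j', j = j' + 1 := ⟨j - 1, by omega⟩
      have e1 : ∑ x ∈ Finset.range (j' + 1 + 1), a (i + 1) x
          = ∑ x ∈ Finset.range (j' + 1), b (i + 1) x := by
        rw [Finset.sum_range_succ', h2 (i + 1) hi1, add_zero]
        exact Finset.sum_congr rfl fun k hk => h3 (i + 1) k hi1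
          (by have := Finset.mem_range.mp hk; omega)
      have e2 : ∑ x ∈ Finset.range (i + 2), a x (j' + 1 + 1)
          = ∑ x ∈ Finset.range (i + 2), b x (j' + 1) :=
        Finset.sum_congr rfl fun k hk => h3 k (j' + 1)
          (by have := Finset.mem_range.mp hk; omega) (by omega)
      have e3 : ∑ x ∈ Finset.range (i + 1), a x (j' + 1)
          = ∑ x ∈ Finset.range (i + 1), b x j' :=
        Finset.sum_congr rfl fun k hk => h3 k j'
          (by have := Finset.mem_range.mp hk; omega) (by omega)
      rw [e1, e2, e3]
      rcases Nat.lt_or_ge (i + 2) m with hcase | hcase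
      · exact g6 i j' (by omega) (by omega)
      · have hieq : i + 2 = m := by omega
        have hfull : ∑ x ∈ Finset.range (i + 2), b x (j' + 1) = 1 := by
          rw [hieq]; exact g2 (j' + 1) (by omega)
        have hle := (g4 i j' (by omega) (by omega)).2
        have hnn := g5 (i + 1) j' hi1 (by omega)
        omega

/-- Delete the last row and first column. -/
def Fmap (n : ℕ) (A : Fin n → Fin n → ℤ) : Fin (n - 1) → Fin (n - 1) → ℤ :=
  fun i j => extF n A i.1 (j.1 + 1)

/-- Add back a last row `(1,0,…,0)` and a first column `(0,…,0,1)ᵀ`. -/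
def Gmap (n : ℕ) (B : Fin (n - 1) → Fin (n - 1) → ℤ) : Fin n → Fin n → ℤ :=
  fun i j => if i.1 = n - 1 then (if j.1 = 0 then 1 else 0)
    else if j.1 = 0 then 0 else extF (n - 1) B i.1 (j.1 - 1)

lemma Fmap_magog {n : ℕ} (hn : 2 ≤ n) {A : Fin n → Fin n → ℤ} (hA : IsMagog n A)
    (hc : A ⟨n - 1, by omega⟩ ⟨0, by omega⟩ = 1) : IsMagog (n - 1) (Fmap n A) := by
  rw [isMagog_iff_s7] at hA ⊢
  refine core_fwd hn (extF n A) _ hA ?_ ?_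
  · rw [extF_eq A (by omega) (by omega)]
    exact hc
  · intro i j hi hj
    rw [extF_eq _ hi hj]
    rfl

lemma Gmap_magog {n : ℕ} (hn : 2 ≤ n) {B : Fin (n - 1) → Fin (n - 1) → ℤ}
    (hB : IsMagog (n - 1) B) :
    IsMagog n (Gmap n B) ∧ Gmap n B ⟨n - 1, by omega⟩ ⟨0, by omega⟩ = 1 := by
  rw [isMagog_iff_s7] at hB
  constructor
  · rw [isMagog_iff_s7]
    refine core_bwd hn _ (extF (n - 1) B) hB ?_ ?_ ?_
    · intro j hj
      rw [extF_eq _ (by omega) hj]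
      simp only [Gmap, Fin.val_mk, if_pos rfl, if_true, eq_self_iff_true]
    · intro i hi
      rw [extF_eq _ (by omega) (by omega)]
      have h : i ≠ n - 1 := by omega
      simp only [Gmap, Fin.val_mk, if_neg h, if_pos rfl, if_true, eq_self_iff_true]
    · intro i j hi hj
      rw [extF_eq _ (by omega) (by omega)]
      have h : i ≠ n - 1 := by omega
      have h' : j + 1 ≠ 0 := by omega
      simp only [Gmap, Fin.val_mk, if_neg h, if_neg h', Nat.add_sub_cancel]
  · simp only [Gmap, Fin.val_mk, if_pos rfl, if_true, eq_self_iff_true]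

lemma Gmap_Fmap {n : ℕ} (hn : 2 ≤ n) {A : Fin n → Fin n → ℤ} (hA : IsMagog n A)
    (hc : A ⟨n - 1, by omega⟩ ⟨0, by omega⟩ = 1) : Gmap n (Fmap n A) = A := by
  have hA' : NatMagog n (extF n A) := (isMagog_iff_s7 n A).mp hA
  have hc' : extF n A (n - 1) 0 = 1 := by
    rw [extF_eq A (by omega) (by omega)]; exact hc
  obtain ⟨hbd1, hbd2⟩ := boundary hn (extF n A) hA' hc'
  funext i j
  show (if i.1 = n - 1 then (if j.1 = 0 then (1 : ℤ) else 0)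
    else if j.1 = 0 then 0 else extF (n - 1) (Fmap n A) i.1 (j.1 - 1)) = A i j
  by_cases hI : i.1 = n - 1
  · have h := hbd1 j.1 j.2
    rw [← hI, extF_eq _ i.2 j.2, Fin.eta, Fin.eta] at h
    rw [if_pos hI, h]
  · rw [if_neg hI]
    by_cases hJ : j.1 = 0
    · have h := hbd2 i.1 (by have := i.2; omega)
      rw [← hJ, extF_eq _ i.2 j.2, Fin.eta, Fin.eta] at h
      rw [if_pos hJ, h]
    · rw [if_neg hJ]
      have hi' : i.1 < n - 1 := by have := i.2; omega
      have hj' : j.1 - 1 < n - 1 := by have := j.2; omega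
      have e : extF (n - 1) (Fmap n A) i.1 (j.1 - 1) = extF n A i.1 (j.1 - 1 + 1) := by
        rw [extF_eq _ hi' hj']; rfl
      have hj1 : j.1 - 1 + 1 = j.1 := by omega
      rw [e, hj1, extF_eq _ i.2 j.2, Fin.eta, Fin.eta]

lemma Fmap_Gmap {n : ℕ} (hn : 2 ≤ n) (B : Fin (n - 1) → Fin (n - 1) → ℤ) :
    Fmap n (Gmap n B) = B := by
  funext i j
  have hi : i.1 < n := by have := i.2; omega
  have hj : j.1 + 1 < n := by have := j.2; omega
  show extF n (Gmap n B) i.1 (j.1 + 1) = B i j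
  rw [extF_eq _ hi hj]
  have h : i.1 ≠ n - 1 := by have := i.2; omega
  have h' : j.1 + 1 ≠ 0 := by omega
  simp only [Gmap, Fin.val_mk, if_neg h, if_neg h', Nat.add_sub_cancel]
  rw [extF_eq _ i.2 j.2, Fin.eta, Fin.eta]

/-- The number of `n × n` magog matrices with a `1` in the bottom-left corner
equals the total number of `(n-1) × (n-1)` magog matrices. -/
theorem card_magog_bottom_left (n : ℕ) (hn : 1 < n) :
    Nat.card {A : Fin n → Fin n → ℤ //
        IsMagog n A ∧ A ⟨n - 1, by omega⟩ ⟨0, by omega⟩ = 1} =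
      Nat.card {B : Fin (n - 1) → Fin (n - 1) → ℤ // IsMagog (n - 1) B} := by
  have hn2 : 2 ≤ n := hn
  exact Nat.card_congr
    { toFun := fun A => ⟨Fmap n A.1, Fmap_magog hn2 A.2.1 A.2.2⟩
      invFun := fun B => ⟨Gmap n B.1, (Gmap_magog hn2 B.2).1, (Gmap_magog hn2 B.2).2⟩
      left_inv := fun A => Subtype.ext (Gmap_Fmap hn2 A.2.1 A.2.2)
      right_inv := fun B => Subtype.ext (Fmap_Gmap hn2 B.1) }
end

section
/- For every n ≥ 1, the number of n×n magog matrices whose first-row 1 lies in the first or second column (i.e. with a_{11} = 1 or a_{12} = 1) equals 2^(n−1). -/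
open Finset Function

section Shape

variable {n : ℕ}

def natExt (A : Fin n → Fin n → ℤ) (i j : ℕ) : ℤ :=
  if h : i < n ∧ j < n then A ⟨i, h.1⟩ ⟨j, h.2⟩ else 0

def colPrefix (A : Fin n → Fin n → ℤ) (i j : ℕ) : ℤ :=
  ∑ m ∈ range (i + 1), natExt A m j

def rowPrefix (s : ℕ → ℕ → ℤ) (i j : ℕ) : ℤ :=
  ∑ m ∈ range (j + 1), s i m

lemma rowPrefix_succ (s : ℕ → ℕ → ℤ) (i j : ℕ) :
    rowPrefix s i (j + 1) = rowPrefix s i j + s i (j + 1) :=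
  sum_range_succ _ _

/-- The magog conditions on a matrix `A`, stated for its column partial sums `s = colPrefix A`:
the row partial sums of `A` are `rowPrefix s i j - rowPrefix s (i - 1) j`. -/
structure IsMagogShape (n : ℕ) (s : ℕ → ℕ → ℤ) : Prop where
  nonneg : ∀ i < n, ∀ j < n, 0 ≤ s i j
  le_one : ∀ i < n, ∀ j < n, s i j ≤ 1
  last_row : ∀ j < n, s (n - 1) j = 1
  rowPrefix_last : ∀ i < n, rowPrefix s i (n - 1) = i + 1
  rowPrefix_le_succ : ∀ i j, i + 1 < n → j < n → rowPrefix s i j ≤ rowPrefix s (i + 1) j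
  special : ∀ i j, i + 2 < n → j + 2 < n →
    rowPrefix s i j + s i j ≤ rowPrefix s (i + 1) (j + 1)

lemma sum_Iic_fin_eq_sum_range {M : Type*} [AddCommMonoid M] (f : ℕ → M) (a : Fin n) :
    ∑ y ∈ Iic a, f y = ∑ m ∈ range (a + 1), f m := by
  rw [Nat.range_succ_eq_Iic, ← Fin.map_valEmbedding_Iic, sum_map]
  rfl

lemma natExt_fin (A : Fin n → Fin n → ℤ) (i j : Fin n) : natExt A i j = A i j := by
  simp [natExt]

lemma sum_Iic_col (A : Fin n → Fin n → ℤ) (i j : Fin n) :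
    ∑ i' ∈ Iic i, A i' j = colPrefix A i j := by
  simp only [colPrefix, ← sum_Iic_fin_eq_sum_range, natExt_fin]

lemma sum_Iic_row (A : Fin n → Fin n → ℤ) (i j : Fin n) :
    ∑ j' ∈ Iic j, A i j' = rowPrefix (natExt A) i j := by
  simp only [rowPrefix, ← sum_Iic_fin_eq_sum_range, natExt_fin]

lemma sum_col (A : Fin n → Fin n → ℤ) (j : Fin n) : ∑ i, A i j = colPrefix A (n - 1) j := by
  rw [colPrefix, Nat.sub_add_cancel (j.pos), ← Fin.sum_univ_eq_sum_range]
  simp only [natExt_fin]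

lemma sum_row (A : Fin n → Fin n → ℤ) (i : Fin n) :
    ∑ j, A i j = rowPrefix (natExt A) i (n - 1) := by
  rw [rowPrefix, Nat.sub_add_cancel (i.pos), ← Fin.sum_univ_eq_sum_range]
  simp only [natExt_fin]

lemma natExt_zero (A : Fin n → Fin n → ℤ) (j : ℕ) : natExt A 0 j = colPrefix A 0 j := by
  simp [colPrefix]

lemma natExt_succ (A : Fin n → Fin n → ℤ) (i j : ℕ) :
    natExt A (i + 1) j = colPrefix A (i + 1) j - colPrefix A i j := by
  rw [colPrefix, colPrefix, sum_range_succ _ (i + 1)]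
  ring

lemma rowPrefix_natExt_zero (A : Fin n → Fin n → ℤ) (j : ℕ) :
    rowPrefix (natExt A) 0 j = rowPrefix (colPrefix A) 0 j := by
  simp [rowPrefix, colPrefix]

lemma rowPrefix_natExt_succ (A : Fin n → Fin n → ℤ) (i j : ℕ) :
    rowPrefix (natExt A) (i + 1) j =
      rowPrefix (colPrefix A) (i + 1) j - rowPrefix (colPrefix A) i j := by
  simp only [rowPrefix, natExt_succ, sum_sub_distrib]

theorem IsMagog.isMagogShape {A : Fin n → Fin n → ℤ} (hA : IsMagog n A) :
    IsMagogShape n (colPrefix A) := by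
  obtain ⟨⟨-, hcol, hrow, hcolPrefix, hrowPrefix⟩, hspecial⟩ := hA
  refine ⟨fun i hi j hj => ?_, fun i hi j hj => ?_, fun j hj => ?_, fun i hi => ?_,
    fun i j hi hj => ?_, fun i j hi hj => ?_⟩
  · simpa [sum_Iic_col] using (hcolPrefix ⟨i, hi⟩ ⟨j, hj⟩).1
  · simpa [sum_Iic_col] using (hcolPrefix ⟨i, hi⟩ ⟨j, hj⟩).2
  · simpa [sum_col] using hcol ⟨j, hj⟩
  · induction i with
    | zero => simpa [sum_row, rowPrefix_natExt_zero] using hrow ⟨0, hi⟩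
    | succ i ih =>
      have := hrow ⟨i + 1, hi⟩
      rw [sum_row, rowPrefix_natExt_succ, ih (by omega)] at this
      push_cast
      linarith
  · have := hrowPrefix ⟨i + 1, hi⟩ ⟨j, hj⟩
    rw [sum_Iic_row, rowPrefix_natExt_succ] at this
    linarith
  · have := hspecial i j hi hj
    rw [sum_Iic_row, sum_Iic_col, sum_Iic_col, rowPrefix_natExt_succ] at this
    rw [rowPrefix_succ]
    linarith

theorem isMagog_of_isMagogShape {A : Fin n → Fin n → ℤ} (hs : IsMagogShape n (colPrefix A)) :
    IsMagog n A := by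
  refine ⟨⟨fun ⟨i, hi⟩ ⟨j, hj⟩ => ?_, fun j => ?_, fun ⟨i, hi⟩ => ?_, fun i j => ?_,
    fun ⟨i, hi⟩ ⟨j, hj⟩ => ?_⟩, fun i j hi hj => ?_⟩
  · rw [← natExt_fin A]
    dsimp only
    cases i with
    | zero =>
      have := hs.nonneg 0 hi j hj; have := hs.le_one 0 hi j hj
      rw [natExt_zero]; omega
    | succ i =>
      have := hs.nonneg i (by omega) j hj; have := hs.le_one i (by omega) j hj
      have := hs.nonneg (i + 1) hi j hj; have := hs.le_one (i + 1) hi j hj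
      rw [natExt_succ]; omega
  · rw [sum_col]; exact hs.last_row j (by omega)
  · rw [sum_row]
    cases i with
    | zero => simpa [rowPrefix_natExt_zero] using hs.rowPrefix_last 0 hi
    | succ i =>
      rw [rowPrefix_natExt_succ, hs.rowPrefix_last _ hi, hs.rowPrefix_last i (by omega)]
      push_cast; ring
  · rw [sum_Iic_col]; exact ⟨hs.nonneg _ i.2 _ j.2, hs.le_one _ i.2 _ j.2⟩
  · rw [sum_Iic_row]
    cases i with
    | zero =>
      rw [rowPrefix_natExt_zero]
      exact sum_nonneg fun m hm => hs.nonneg 0 hi m (by rw [mem_range] at hm; omega)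
    | succ i =>
      rw [rowPrefix_natExt_succ]
      linarith [hs.rowPrefix_le_succ i j (by omega) hj]
  · rw [sum_Iic_row, sum_Iic_col, sum_Iic_col]
    dsimp only
    rw [rowPrefix_natExt_succ]
    linarith [hs.special i j hi hj, rowPrefix_succ (colPrefix A) (i + 1) j]

def ofShape (n : ℕ) (s : ℕ → ℕ → ℤ) (i j : Fin n) : ℤ :=
  s i j - if (i : ℕ) = 0 then 0 else s (i - 1) j

lemma colPrefix_ofShape (s : ℕ → ℕ → ℤ) {i j : ℕ} (hi : i < n) (hj : j < n) :
    colPrefix (ofShape n s) i j = s i j := by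
  induction i with
  | zero => simp [colPrefix, natExt, ofShape, hi, hj]
  | succ i ih =>
    rw [colPrefix, sum_range_succ, ← colPrefix, ih (by omega)]
    simp [natExt, ofShape, hi, hj]

lemma eq_of_colPrefix_eq {A B : Fin n → Fin n → ℤ}
    (h : ∀ i < n, ∀ j < n, colPrefix A i j = colPrefix B i j) : A = B := by
  ext ⟨i, hi⟩ ⟨j, hj⟩
  rw [← natExt_fin A, ← natExt_fin B]
  dsimp only
  cases i with
  | zero => rw [natExt_zero, natExt_zero, h 0 hi j hj]
  | succ i => rw [natExt_succ, natExt_succ, h i (by omega) j hj, h (i + 1) hi j hj]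

lemma rowPrefix_congr {s t : ℕ → ℕ → ℤ} (h : ∀ i < n, ∀ j < n, s i j = t i j) {i j : ℕ}
    (hi : i < n) (hj : j < n) : rowPrefix s i j = rowPrefix t i j :=
  sum_congr rfl fun m hm => h i hi m (by rw [mem_range] at hm; omega)

lemma IsMagogShape.congr {s t : ℕ → ℕ → ℤ} (hs : IsMagogShape n s)
    (h : ∀ i < n, ∀ j < n, s i j = t i j) : IsMagogShape n t where
  nonneg i hi j hj := h i hi j hj ▸ hs.nonneg i hi j hj
  le_one i hi j hj := h i hi j hj ▸ hs.le_one i hi j hj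
  last_row j hj := h (n - 1) (by omega) j hj ▸ hs.last_row j hj
  rowPrefix_last i hi := rowPrefix_congr h hi (j := n - 1) (by omega) ▸ hs.rowPrefix_last i hi
  rowPrefix_le_succ i j hi hj := by
    rw [← rowPrefix_congr h (by omega) hj, ← rowPrefix_congr h hi hj]
    exact hs.rowPrefix_le_succ i j hi hj
  special i j hi hj := by
    rw [← rowPrefix_congr h (by omega) (by omega), ← rowPrefix_congr h (by omega) (by omega),
      ← h i (by omega) j (by omega)]
    exact hs.special i j hi hj

theorem isMagog_ofShape {s : ℕ → ℕ → ℤ} (hs : IsMagogShape n s) : IsMagog n (ofShape n s) :=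
  isMagog_of_isMagogShape <| hs.congr fun _ hi _ hj => (colPrefix_ofShape s hi hj).symm

end Shape

structure IsHoleSeq (m : ℕ) (h : ℕ → ℕ) : Prop where
  le : ∀ i < m, h i ≤ i + 1
  lt_succ : ∀ i, i + 1 < m → 1 ≤ h i → h i < h (i + 1)
  eq_zero : ∀ i, m ≤ i → h i = 0

def holePattern (i a j : ℕ) : ℤ :=
  if j ≤ i + 1 ∧ j ≠ a then 1 else 0

lemma sum_range_holePattern (i a j : ℕ) :
    ∑ m ∈ range (j + 1), holePattern i a m =
      min (j + 1) (i + 2) - if a ≤ j ∧ a ≤ i + 1 then 1 else 0 := by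
  induction j with
  | zero => simp only [holePattern, zero_add, range_one, sum_singleton]; split_ifs <;> omega
  | succ j ih =>
    rw [sum_range_succ, ih, holePattern]
    split_ifs <;> omega

section Holes

variable {n i : ℕ} {h : ℕ → ℕ}

/-- The last row has no hole: its hole is put at the column `n`, out of range. -/
def hole (n : ℕ) (h : ℕ → ℕ) (i : ℕ) : ℕ :=
  if i + 1 < n then h i else n

def holeRow (n : ℕ) (h : ℕ → ℕ) (i j : ℕ) : ℤ :=
  holePattern i (hole n h i) j

lemma hole_of_lt (hi : i + 1 < n) : hole n h i = h i := if_pos hi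

lemma hole_of_le (hi : n ≤ i + 1) : hole n h i = n := if_neg (by omega)

lemma IsHoleSeq.hole_le (hs : IsHoleSeq (n - 1) h) (hi : i + 1 < n) : hole n h i ≤ i + 1 := by
  rw [hole_of_lt hi]; exact hs.le i (by omega)

lemma IsHoleSeq.hole_lt_hole_succ (hs : IsHoleSeq (n - 1) h) (hi : i + 1 < n)
    (h1 : 1 ≤ hole n h i) : hole n h i < hole n h (i + 1) := by
  rw [hole_of_lt hi] at h1 ⊢
  by_cases hi' : i + 2 < n
  · rw [hole_of_lt hi']; exact hs.lt_succ i (by omega) h1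
  · rw [hole_of_le (by omega)]; have := hs.le i (by omega); omega

lemma rowPrefix_holeRow (i j : ℕ) : rowPrefix (holeRow n h) i j =
    min (j + 1) (i + 2) - if hole n h i ≤ j ∧ hole n h i ≤ i + 1 then 1 else 0 :=
  sum_range_holePattern _ _ _

theorem IsHoleSeq.isMagogShape_holeRow (hs : IsHoleSeq (n - 1) h) :
    IsMagogShape n (holeRow n h) where
  nonneg i _ j _ := by unfold holeRow holePattern; split_ifs <;> omega
  le_one i _ j _ := by unfold holeRow holePattern; split_ifs <;> omega
  last_row j hj := by rw [holeRow, holePattern, hole_of_le (by omega), if_pos (by omega)]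
  rowPrefix_last i hi := by
    rw [rowPrefix_holeRow]
    by_cases hi' : i + 1 < n
    · have := hs.hole_le hi'; split_ifs <;> omega
    · rw [hole_of_le (by omega)]; split_ifs <;> omega
  rowPrefix_le_succ i j hi hj := by
    have := hs.hole_le hi
    have := hs.hole_lt_hole_succ hi
    by_cases hi' : i + 2 < n
    · have := hs.hole_le hi'
      rw [rowPrefix_holeRow, rowPrefix_holeRow]; split_ifs <;> omega
    · have := hole_of_le (h := h) (show n ≤ i + 1 + 1 by omega)
      rw [rowPrefix_holeRow, rowPrefix_holeRow]; split_ifs <;> omega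
  special i j hi hj := by
    have := hs.hole_le (i := i) (by omega)
    have := hs.hole_lt_hole_succ (i := i) (by omega)
    rw [rowPrefix_holeRow, rowPrefix_holeRow, holeRow, holePattern]
    split_ifs <;> omega

lemma IsHoleSeq.eq_of_holeRow_eq {h' : ℕ → ℕ} (hs : IsHoleSeq (n - 1) h)
    (hs' : IsHoleSeq (n - 1) h') (heq : ∀ i < n, ∀ j < n, holeRow n h i j = holeRow n h' i j) :
    h = h' := by
  funext i
  by_cases hi : i + 1 < n
  · by_contra hne
    have hle := hs.le i (by omega)
    have := heq i (by omega) (h i) (by omega)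
    simp only [holeRow, holePattern, hole_of_lt hi] at this
    split_ifs at this <;> omega
  · rw [hs.eq_zero i (by omega), hs'.eq_zero i (by omega)]

end Holes

lemma exists_eq_ite_of_sum_range_eq {x : ℕ → ℤ} {M : ℕ} (h01 : ∀ j ≤ M, x j = 0 ∨ x j = 1)
    (hsum : ∑ j ∈ range (M + 1), x j = M) : ∃ b ≤ M, ∀ j ≤ M, x j = if j = b then 0 else 1 := by
  have hx : ∀ j ∈ range (M + 1), x j = 1 - if x j = 0 then 1 else 0 := fun j hj => by
    rcases h01 j (by rw [mem_range] at hj; omega) with h | h <;> simp [h]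
  rw [sum_congr rfl hx, sum_sub_distrib, sum_boole, sum_const, card_range, nsmul_one] at hsum
  have hcard : #{j ∈ range (M + 1) | x j = 0} = 1 := by push_cast at hsum; omega
  obtain ⟨b, hb⟩ := card_eq_one.1 hcard
  have hzero : ∀ j ≤ M, x j = 0 ↔ j = b := fun j hj => by
    simpa [show j < M + 1 by omega] using congrArg (j ∈ ·) hb
  have hbM : b ≤ M := by
    have := (mem_filter.1 (hb ▸ mem_singleton_self b)).1
    simp only [mem_range] at this
    omega
  refine ⟨b, hbM, fun j hj => ?_⟩
  split_ifs with hjb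
  · exact (hzero j hj).2 hjb
  · exact (h01 j hj).resolve_left fun h0 => hjb ((hzero j hj).1 h0)

section Classification

variable {n i j a b : ℕ} {s : ℕ → ℕ → ℤ}

def IsHoleRow (n : ℕ) (s : ℕ → ℕ → ℤ) (i a : ℕ) : Prop :=
  a ≤ i + 1 ∧ ∀ j < n, s i j = holePattern i a j

lemma IsHoleRow.rowPrefix_eq (ha : IsHoleRow n s i a) (hj : j < n) :
    rowPrefix s i j = min (j + 1) (i + 2) - if a ≤ j then 1 else 0 := by
  rw [rowPrefix, sum_congr rfl fun m hm => ha.2 m (by rw [mem_range] at hm; omega),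
    sum_range_holePattern]
  simp [ha.1]

lemma IsMagogShape.exists_isHoleRow_zero (hs : IsMagogShape n s) (hn : 1 < n)
    (hcorner : s 0 0 = 1 ∨ s 0 1 = 1) : ∃ a, IsHoleRow n s 0 a := by
  have hsum : ∑ j ∈ range n, s 0 j = 1 := by
    simpa [rowPrefix, Nat.sub_add_cancel (show 1 ≤ n by omega)] using hs.rowPrefix_last 0 (by omega)
  have hrest : ∀ c < n, s 0 c = 1 → ∀ j < n, j ≠ c → s 0 j = 0 := fun c hc hc1 j hj hjc => by
    have := sum_le_sum_of_subset_of_nonneg (f := s 0)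
      (show {c, j} ⊆ range n by simp [insert_subset_iff, hc, hj])
      fun m hm _ => hs.nonneg 0 (by omega) m (mem_range.1 hm)
    rw [sum_pair (Ne.symm hjc)] at this
    have := hs.nonneg 0 (by omega) j hj
    omega
  rcases hcorner with h0 | h1
  · refine ⟨1, le_rfl, fun j hj => ?_⟩
    rcases eq_or_ne j 0 with rfl | hj0
    · simpa [holePattern] using h0
    · rw [hrest 0 (by omega) h0 j hj hj0, holePattern, if_neg (by omega)]
  · refine ⟨0, by omega, fun j hj => ?_⟩
    rcases eq_or_ne j 1 with rfl | hj1
    · simpa [holePattern] using h1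
    · rw [hrest 1 hn h1 j hj hj1, holePattern, if_neg (by omega)]

/-- The special inequality just before the hole `a` of row `i` fills row `i + 1` up to column `a`.
-/
lemma IsMagogShape.lt_of_isHoleRow (hs : IsMagogShape n s) (hi : i + 2 < n)
    (ha : IsHoleRow n s i a) (hb : IsHoleRow n s (i + 1) b) (ha1 : 1 ≤ a) : a < b := by
  have hale := ha.1
  have := hs.special i (a - 1) hi (by omega)
  rw [ha.rowPrefix_eq (by omega), ha.2 _ (by omega), Nat.sub_add_cancel ha1,
    hb.rowPrefix_eq (by omega), holePattern] at this
  split_ifs at this <;> omega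

/-- The special inequality at column `i + 1` (at column `i` if `i + 1` is the hole of row `i`)
puts the whole mass `i + 2` of row `i + 1` into its first `i + 3` columns. -/
lemma IsMagogShape.rowPrefix_succ_ge (hs : IsMagogShape n s) (hi : i + 2 < n)
    (ha : IsHoleRow n s i a) : (i : ℤ) + 2 ≤ rowPrefix s (i + 1) (i + 2) := by
  have hale := ha.1
  have hx0 : ∀ j < n, 0 ≤ s (i + 1) j := hs.nonneg (i + 1) (by omega)
  have htotal := hs.rowPrefix_last (i + 1) (by omega)
  show _ ≤ rowPrefix s (i + 1) (i + 1 + 1)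
  by_cases hai : a = i + 1
  · have hsp := hs.special i i hi hi
    rw [ha.rowPrefix_eq (by omega), ha.2 i (by omega), holePattern] at hsp
    have := hx0 (i + 1 + 1) hi
    rw [rowPrefix_succ _ _ (i + 1)]
    split_ifs at hsp <;> omega
  · rcases (show i + 3 < n ∨ i + 3 = n by omega) with h3 | h3
    · have hsp := hs.special i (i + 1) hi h3
      rw [ha.rowPrefix_eq (by omega), ha.2 (i + 1) (by omega), holePattern] at hsp
      split_ifs at hsp <;> omega
    · rw [show n - 1 = i + 1 + 1 by omega] at htotal
      omega

lemma IsMagogShape.exists_isHoleRow_succ (hs : IsMagogShape n s) (hi : i + 2 < n)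
    (ha : IsHoleRow n s i a) : ∃ b, IsHoleRow n s (i + 1) b := by
  have hx0 : ∀ j < n, 0 ≤ s (i + 1) j := hs.nonneg (i + 1) (by omega)
  have hx1 : ∀ j < n, s (i + 1) j ≤ 1 := hs.le_one (i + 1) (by omega)
  have htotal := hs.rowPrefix_last (i + 1) (by omega)
  have hmass := hs.rowPrefix_succ_ge hi ha
  have hsplit : rowPrefix s (i + 1) (i + 2) + ∑ j ∈ Ico (i + 3) n, s (i + 1) j =
      rowPrefix s (i + 1) (n - 1) := by
    rw [rowPrefix, rowPrefix, Nat.sub_add_cancel (show 1 ≤ n by omega)]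
    exact sum_range_add_sum_Ico _ (by omega)
  have htail_nonneg : 0 ≤ ∑ j ∈ Ico (i + 3) n, s (i + 1) j :=
    sum_nonneg fun j hj => hx0 j (mem_Ico.1 hj).2
  have hhead : rowPrefix s (i + 1) (i + 2) = (i + 2 : ℕ) := by push_cast at htotal ⊢; omega
  have htail : ∀ j ∈ Ico (i + 3) n, s (i + 1) j = 0 :=
    (sum_eq_zero_iff_of_nonneg fun j hj => hx0 j (mem_Ico.1 hj).2).1 (by omega)
  obtain ⟨b, hb, hxb⟩ := exists_eq_ite_of_sum_range_eq (fun j hj => by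
    have := hx0 j (by omega); have := hx1 j (by omega); omega) hhead
  refine ⟨b, hb, fun j hj => ?_⟩
  rw [holePattern]
  by_cases hj' : j ≤ i + 2
  · rw [hxb j hj']; split_ifs <;> omega
  · rw [htail j (mem_Ico.2 ⟨by omega, hj⟩), if_neg (by omega)]

theorem IsMagogShape.exists_holeSeq (hs : IsMagogShape n s)
    (hcorner : 1 < n → s 0 0 = 1 ∨ s 0 1 = 1) :
    ∃ h, IsHoleSeq (n - 1) h ∧ ∀ i < n, ∀ j < n, s i j = holeRow n h i j := by
  have rows : ∀ i, i + 1 < n → ∃ a, IsHoleRow n s i a := by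
    intro i
    induction i with
    | zero => exact fun hn => hs.exists_isHoleRow_zero hn (hcorner hn)
    | succ i ih => exact fun hi => (ih (by omega)).elim fun a ha => hs.exists_isHoleRow_succ hi ha
  choose! a ha using rows
  refine ⟨fun i => if i + 1 < n then a i else 0,
    ⟨fun i hi => ?_, fun i hi h1 => ?_, fun i hi => ?_⟩, fun i hi j hj => ?_⟩
  · simpa [show i + 1 < n by omega] using (ha i (by omega)).1
  · simp only [show i + 1 < n by omega, show i + 1 + 1 < n by omega, if_true] at h1 ⊢
    exact hs.lt_of_isHoleRow (by omega) (ha i (by omega)) (ha (i + 1) (by omega)) h1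
  · simp [show ¬ i + 1 < n by omega]
  · by_cases hi' : i + 1 < n
    · rw [(ha i hi').2 j hj, holeRow, hole_of_lt hi', if_pos hi']
    · rw [show i = n - 1 by omega, hs.last_row j hj, holeRow, hole_of_le (by omega), holePattern,
        if_pos (by omega)]

end Classification

section Counting

variable {m i j : ℕ} {h : ℕ → ℕ}

def prependZero (h : ℕ → ℕ) : ℕ → ℕ
  | 0 => 0
  | i + 1 => h i

lemma IsHoleSeq.eq_succ_of_le (hs : IsHoleSeq m h) (hij : i ≤ j) (hj : j < m) (hi : h i = i + 1) :
    h j = j + 1 := by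
  induction j, hij using Nat.le_induction with
  | base => exact hi
  | succ j hij ih =>
    have := hs.lt_succ j hj (by rw [ih (by omega)]; omega)
    have := hs.le (j + 1) hj
    omega

lemma IsHoleSeq.update_succ (hs : IsHoleSeq m h) : IsHoleSeq (m + 1) (update h m (m + 1)) where
  le i hi := by
    rcases eq_or_ne i m with rfl | hne
    · simp
    · rw [update_of_ne hne]; exact hs.le i (by omega)
  lt_succ i hi h1 := by
    rw [update_of_ne (by omega)] at h1 ⊢
    rcases eq_or_ne (i + 1) m with hm | hne
    · rw [hm, update_self]; have := hs.le i (by omega); omega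
    · rw [update_of_ne hne]; exact hs.lt_succ i (by omega) h1
  eq_zero i hi := by rw [update_of_ne (by omega)]; exact hs.eq_zero i (by omega)

lemma IsHoleSeq.update_zero (hs : IsHoleSeq (m + 1) h) : IsHoleSeq m (update h m 0) where
  le i hi := by rw [update_of_ne (by omega)]; exact hs.le i (by omega)
  lt_succ i hi h1 := by
    rw [update_of_ne (by omega)] at h1 ⊢
    rw [update_of_ne (by omega)]
    exact hs.lt_succ i (by omega) h1
  eq_zero i hi := by
    rcases eq_or_ne i m with rfl | hne
    · simp
    · rw [update_of_ne hne]; exact hs.eq_zero i (by omega)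

lemma IsHoleSeq.prependZero (hs : IsHoleSeq m h) : IsHoleSeq (m + 1) (prependZero h) where
  le
    | 0, _ => Nat.zero_le _
    | i + 1, hi => (hs.le i (by omega)).trans (Nat.le_succ _)
  lt_succ
    | 0, _, h1 => absurd h1 (Nat.not_succ_le_zero 0)
    | i + 1, hi, h1 => hs.lt_succ i (by omega) h1
  eq_zero
    | 0, hi => absurd hi (by omega)
    | i + 1, hi => hs.eq_zero i (by omega)

lemma IsHoleSeq.tail (hs : IsHoleSeq (m + 1) h) (hm : h m ≠ m + 1) :
    IsHoleSeq m (fun i => h (i + 1)) where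
  le i hi := by
    have := hs.le (i + 1) (by omega)
    have := mt (hs.eq_succ_of_le (show i + 1 ≤ m by omega) (by omega)) hm
    omega
  lt_succ i hi := hs.lt_succ (i + 1) (by omega)
  eq_zero i hi := hs.eq_zero (i + 1) (by omega)

lemma IsHoleSeq.apply_zero_eq_zero_of_ne (hs : IsHoleSeq (m + 1) h) (hm : h m ≠ m + 1) :
    h 0 = 0 := by
  have := hs.le 0 (by omega)
  have := mt (hs.eq_succ_of_le (Nat.zero_le m) (by omega)) hm
  omega

/-- Either the last hole is `m + 1`, or no hole lies on the diagonal `h i = i + 1`, and then the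
first hole is `0` and the others shift down to a hole sequence of length `m`. -/
def holeSeqSuccEquiv (m : ℕ) :
    {h // IsHoleSeq (m + 1) h} ≃ {h // IsHoleSeq m h} ⊕ {h // IsHoleSeq m h} where
  toFun h := if hm : h.1 m = m + 1 then .inl ⟨update h.1 m 0, h.2.update_zero⟩
    else .inr ⟨fun i => h.1 (i + 1), h.2.tail hm⟩
  invFun := Sum.elim (fun h => ⟨update h.1 m (m + 1), h.2.update_succ⟩)
    (fun h => ⟨prependZero h.1, h.2.prependZero⟩)
  left_inv := by
    rintro ⟨h, hs⟩
    by_cases hm : h m = m + 1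
    · simp only [hm, dite_true, Sum.elim_inl, update_idem, Subtype.mk.injEq]
      rw [← hm, update_eq_self]
    · simp only [hm, dite_false, Sum.elim_inr, Subtype.mk.injEq]
      funext i
      cases i with
      | zero => exact (hs.apply_zero_eq_zero_of_ne hm).symm
      | succ i => rfl
  right_inv := by
    rintro (⟨h, hs⟩ | ⟨h, hs⟩)
    · simp [← hs.eq_zero m le_rfl]
    · have hm : prependZero h m ≠ m + 1 := by
        cases m with
        | zero => simp [prependZero]
        | succ m => have := hs.le m (by omega); simp only [prependZero]; omega
      exact dif_neg hm

theorem card_holeSeq (m : ℕ) : Nat.card {h // IsHoleSeq m h} = 2 ^ m := by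
  induction m with
  | zero =>
    refine Nat.card_eq_one_iff_exists.2 ⟨⟨0, ⟨nofun, nofun, fun _ _ => rfl⟩⟩, fun ⟨h, hs⟩ => ?_⟩
    exact Subtype.ext (funext fun i => hs.eq_zero i (Nat.zero_le i))
  | succ m ih =>
    have : Finite {h // IsHoleSeq m h} := Nat.finite_of_card_ne_zero (by rw [ih]; positivity)
    rw [Nat.card_congr (holeSeqSuccEquiv m), Nat.card_sum, ih, pow_succ, mul_two]

end Counting

section HoleMatrix

variable {n : ℕ} {h : ℕ → ℕ}

def holeMatrix (n : ℕ) (h : ℕ → ℕ) : Fin n → Fin n → ℤ :=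
  ofShape n (holeRow n h)

lemma IsHoleSeq.isMagog_holeMatrix (hs : IsHoleSeq (n - 1) h) : IsMagog n (holeMatrix n h) :=
  isMagog_ofShape hs.isMagogShape_holeRow

lemma IsHoleSeq.holeMatrix_corner (hs : IsHoleSeq (n - 1) h) (hn : 0 < n) :
    holeMatrix n h ⟨0, hn⟩ ⟨0, hn⟩ = 1 ∨ ∃ h1 : 1 < n, holeMatrix n h ⟨0, hn⟩ ⟨1, h1⟩ = 1 := by
  simp only [holeMatrix, ofShape, holeRow, holePattern, if_true, sub_zero]
  by_cases h1 : 1 < n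
  · have := hs.hole_le (i := 0) h1
    by_cases h0 : hole n h 0 = 0
    · exact Or.inr ⟨h1, by simp [h0]⟩
    · exact Or.inl (by simp [Ne.symm h0])
  · simp [hole_of_le (show n ≤ 0 + 1 by omega), hn.ne]

lemma IsHoleSeq.eq_of_holeMatrix_eq {h' : ℕ → ℕ} (hs : IsHoleSeq (n - 1) h)
    (hs' : IsHoleSeq (n - 1) h') (heq : holeMatrix n h = holeMatrix n h') : h = h' :=
  hs.eq_of_holeRow_eq hs' fun i hi j hj => by
    rw [← colPrefix_ofShape (holeRow n h) hi hj, ← colPrefix_ofShape (holeRow n h') hi hj]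
    exact congrArg (colPrefix · i j) heq

lemma IsMagog.exists_holeMatrix_eq {A : Fin n → Fin n → ℤ} (hA : IsMagog n A) (hn : 0 < n)
    (hcorner : A ⟨0, hn⟩ ⟨0, hn⟩ = 1 ∨ ∃ h : 1 < n, A ⟨0, hn⟩ ⟨1, h⟩ = 1) :
    ∃ h, IsHoleSeq (n - 1) h ∧ holeMatrix n h = A := by
  have hcorner' : 1 < n → colPrefix A 0 0 = 1 ∨ colPrefix A 0 1 = 1 := fun h1 => by
    simpa [← natExt_zero, natExt, hn, h1] using hcorner
  obtain ⟨h, hs, hrow⟩ := hA.isMagogShape.exists_holeSeq hcorner'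
  exact ⟨h, hs, eq_of_colPrefix_eq fun i hi j hj => by
    rw [holeMatrix, colPrefix_ofShape _ hi hj, hrow i hi j hj]⟩

end HoleMatrix

/-- The number of `n × n` magog matrices whose first-row `1` lies in the first
or second column is `2 ^ (n - 1)`. -/
theorem card_magog_first_row_first_two (n : ℕ) (hn : 0 < n) :
    Nat.card {A : Fin n → Fin n → ℤ //
        IsMagog n A ∧ (A ⟨0, hn⟩ ⟨0, hn⟩ = 1 ∨ ∃ h : 1 < n, A ⟨0, hn⟩ ⟨1, h⟩ = 1)} =
      2 ^ (n - 1) := by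
  rw [← card_holeSeq (n - 1)]
  refine (Nat.card_eq_of_bijective (fun h => ⟨holeMatrix n h.1, h.2.isMagog_holeMatrix,
    h.2.holeMatrix_corner hn⟩) ⟨fun ⟨h, hs⟩ ⟨h', hs'⟩ heq => ?_, fun ⟨A, hA, hcorner⟩ => ?_⟩).symm
  · exact Subtype.ext (hs.eq_of_holeMatrix_eq hs' (congrArg Subtype.val heq))
  · obtain ⟨h, hs, rfl⟩ := hA.exists_holeMatrix_eq hn hcorner
    exact ⟨⟨h, hs⟩, rfl⟩
end
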